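/- arXiv:2309.11113 — 8 statements merged into one kernel-verified Lean document; each statement's English description precedes it below -/
import Mathlib

section
/- Every finite noncyclic group has at least three nonpower subgroups. -/
/-- The power subgroup `G^m`: the subgroup generated by all `m`-th powers. -/
def powSub (G : Type*) [Group G] (m : ℕ) : Subgroup G :=
  Subgroup.closure {x : G | ∃ g : G, g ^ m = x}

/-- A subgroup is a nonpower subgroup if it is not `G^m` for any `m ≥ 1`. -/
def IsNonpower {G : Type*} [Group G] (H : Subgroup G) : Prop :=
  ¬ ∃ m : ℕ, 0 < m ∧ H = powSub G m

/-- The number of nonpower subgroups of `G`. -/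
noncomputable def nps (G : Type*) [Group G] : ℕ :=
  Nat.card {H : Subgroup G // IsNonpower H}

/-- The number of power subgroups of `G`. -/
noncomputable def ps (G : Type*) [Group G] : ℕ :=
  Nat.card {H : Subgroup G // ∃ m : ℕ, 0 < m ∧ H = powSub G m}

/-- The total number of subgroups of `G`. -/
noncomputable def numSubgroups (G : Type*) [Group G] : ℕ :=
  Nat.card (Subgroup G)


/-!
Power subgroups are characteristic, hence normal. If some Sylow `p`-subgroup of `G` is not
normal, then none is, and there are at least `p + 1 ≥ 3` of them, all nonpower.

Otherwise `G` is nilpotent, so, being noncyclic, it has a normal noncyclic Sylow subgroup `P`.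
A power subgroup `G^d` contained in `P` is either `P` itself (when `p ∤ d`, as `d`-th powers are
bijective on `P`) or contained in `P^p` (when `p ∣ d`). Since `P^p` lies in the Frattini subgroup
of `P`, each `⟨x⟩ ⊔ P^p` is a proper subgroup of `P`, and as `P` is not a union of two proper
subgroups, three of them are distinct and not contained in `P^p`.
-/

open Subgroup

section PowSub

variable {G : Type*} [Group G]

theorem pow_mem_powSub (g : G) (m : ℕ) : g ^ m ∈ powSub G m :=
  subset_closure ⟨g, rfl⟩

instance powSub_characteristic (m : ℕ) : (powSub G m).Characteristic := by
  refine characteristic_iff_map_le.mpr fun φ => ?_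
  rw [powSub, MonoidHom.map_closure]
  refine closure_mono ?_
  rintro _ ⟨_, ⟨g, rfl⟩, rfl⟩
  exact ⟨φ g, (map_pow φ g m).symm⟩

theorem IsNonpower.of_not_normal {H : Subgroup G} (hH : ¬ H.Normal) : IsNonpower H := by
  rintro ⟨m, -, rfl⟩
  exact hH inferInstance

theorem three_le_nps [Finite G] {H₁ H₂ H₃ : Subgroup G}
    (h₁ : IsNonpower H₁) (h₂ : IsNonpower H₂) (h₃ : IsNonpower H₃)
    (h₁₂ : H₁ ≠ H₂) (h₁₃ : H₁ ≠ H₃) (h₂₃ : H₂ ≠ H₃) : 3 ≤ nps G := by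
  have := Fintype.ofFinite {H : Subgroup G // IsNonpower H}
  rw [nps, Nat.card_eq_fintype_card, Nat.succ_le_iff, Fintype.two_lt_card_iff]
  exact ⟨⟨H₁, h₁⟩, ⟨H₂, h₂⟩, ⟨H₃, h₃⟩,
    by simpa using h₁₂, by simpa using h₁₃, by simpa using h₂₃⟩

theorem IsPGroup.le_powSub {p d : ℕ} {H : Subgroup G} (hH : IsPGroup p H)
    (hpd : p.Coprime d) : H ≤ powSub G d := by
  intro x hx
  obtain ⟨y, hy⟩ := (hH.powEquiv hpd).surjective ⟨x, hx⟩
  rw [IsPGroup.powEquiv_apply] at hy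
  have hxy : x = (y : G) ^ d := by rw [← coe_pow, hy]
  exact hxy ▸ pow_mem_powSub (y : G) d

end PowSub

theorem exists_three_ne_top_not_le {Q : Type*} [Group Q] {K : Subgroup Q}
    (hK : ∀ x : Q, zpowers x ⊔ K ≠ ⊤) :
    ∃ N₁ N₂ N₃ : Subgroup Q,
      (N₁ ≠ ⊤ ∧ ¬ N₁ ≤ K) ∧ (N₂ ≠ ⊤ ∧ ¬ N₂ ≤ K) ∧ (N₃ ≠ ⊤ ∧ ¬ N₃ ≤ K) ∧
      N₁ ≠ N₂ ∧ N₁ ≠ N₃ ∧ N₂ ≠ N₃ := by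
  set N : Q → Subgroup Q := fun x => zpowers x ⊔ K
  have mem_N (x : Q) : x ∈ N x := mem_sup_left (mem_zpowers x)
  have le_N (x : Q) : K ≤ N x := le_sup_right
  have exists_not_mem {H : Subgroup Q} (hH : H ≠ ⊤) : ∃ x, x ∉ H := by
    simpa using SetLike.exists_of_lt hH.lt_top
  obtain ⟨x, hx⟩ := exists_not_mem (by simpa using hK 1)
  obtain ⟨y, hy⟩ := exists_not_mem (hK x)
  obtain ⟨z, hzx, hzy⟩ : ∃ z, z ∉ N x ∧ z ∉ N y := by
    by_contra! hcover
    have := SubgroupClass.subset_union.mp fun z (_ : z ∈ (⊤ : Subgroup Q)) =>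
      (em (z ∈ N x)).imp_right (hcover z)
    exact this.elim (fun h => hK x (top_le_iff.mp h)) fun h => hK y (top_le_iff.mp h)
  exact ⟨N x, N y, N z,
    ⟨hK x, fun h => hx (h (mem_N x))⟩,
    ⟨hK y, fun h => hy (le_N x (h (mem_N y)))⟩,
    ⟨hK z, fun h => hzx (le_N x (h (mem_N z)))⟩,
    fun h => hy (h.ge (mem_N y)), fun h => hzx (h.ge (mem_N z)), fun h => hzy (h.ge (mem_N z))⟩

namespace IsPGroup

variable {p : ℕ} [Fact p.Prime] {Q : Type*} [Group Q] [Finite Q]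

theorem index_eq_of_isCoatom (hQ : IsPGroup p Q) {M : Subgroup Q} (hM : IsCoatom M) :
    M.index = p := by
  have hp : p.Prime := Fact.out
  obtain ⟨n, hn⟩ := IsPGroup.iff_card.mp (hQ.to_subgroup M)
  obtain ⟨k, hk⟩ := hQ.index M
  have hk0 : k ≠ 0 := by
    rintro rfl
    exact hM.1 (index_eq_one.mp hk)
  have hcard : Nat.card Q = p ^ n * p ^ k := by rw [← M.card_mul_index, hn, hk]
  obtain ⟨K, hK, hMK⟩ := Sylow.exists_subgroup_card_pow_prime_le p
    (hcard ▸ mul_dvd_mul_left _ (dvd_pow_self p hk0) : p ^ (n + 1) ∣ Nat.card Q) M hn n.le_succ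
  obtain rfl | rfl := hM.le_iff.mp hMK
  · rw [card_top, hcard, pow_succ] at hK
    rw [hk, Nat.eq_of_mul_eq_mul_left (pow_pos hp.pos n) hK]
  · rw [hn] at hK
    exact absurd hK (Nat.pow_right_injective hp.two_le |>.ne n.succ_ne_self.symm)

theorem pow_mem_of_isCoatom (hQ : IsPGroup p Q) {M : Subgroup Q} (hM : IsCoatom M) (x : Q) :
    x ^ p ∈ M := by
  have hmax : ∀ H : Subgroup Q, IsCoatom H → H.Normal :=
    (Group.isNilpotent_of_finite_tfae.out 0 2).mp hQ.isNilpotent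
  have := hmax M hM
  simpa [hQ.index_eq_of_isCoatom hM] using M.pow_index_mem x

theorem powSub_le_frattini (hQ : IsPGroup p Q) : powSub Q p ≤ frattini Q :=
  le_iInf₂ fun M hM => (closure_le M).mpr fun _ ⟨x, hx⟩ => hx ▸ hQ.pow_mem_of_isCoatom hM x

theorem zpowers_sup_powSub_ne_top (hQ : IsPGroup p Q) (hnc : ¬ IsCyclic Q) (x : Q) :
    zpowers x ⊔ powSub Q p ≠ ⊤ := by
  intro h
  have := frattini_nongenerating (top_le_iff.mp (h ▸ sup_le_sup_left hQ.powSub_le_frattini _))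
  exact hnc (isCyclic_iff_exists_zpowers_eq_top.mpr ⟨x, this⟩)

end IsPGroup

namespace Sylow

variable {G : Type*} [Group G] {p : ℕ} [Fact p.Prime]

theorem exists_pow_prime_eq_pow (P : Sylow p G) [(P : Subgroup G).Normal]
    [(P : Subgroup G).FiniteIndex] {d : ℕ} (hpd : p ∣ d) {g : G}
    (hg : g ^ d ∈ (P : Subgroup G)) : ∃ x ∈ (P : Subgroup G), x ^ p = g ^ d := by
  -- the order `o` of `g` modulo `P` is prime to `p` and divides `d`, so `d = p * o * w`
  set o := orderOf (g : G ⧸ (P : Subgroup G))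
  have hpo : p.Coprime o := Nat.Coprime.coprime_dvd_right (orderOf_dvd_natCard _)
    ((Nat.Prime.coprime_iff_not_dvd Fact.out).mpr P.not_dvd_index)
  have hod : o ∣ d := orderOf_dvd_of_pow_eq_one (by
    rw [← QuotientGroup.mk_pow, QuotientGroup.eq_one_iff]; exact hg)
  obtain ⟨w, rfl⟩ := hpo.mul_dvd_of_dvd_of_dvd hpd hod
  refine ⟨g ^ (o * w), ?_, by rw [← pow_mul]; ring_nf⟩
  rw [← QuotientGroup.eq_one_iff, QuotientGroup.mk_pow, pow_mul, pow_orderOf_eq_one, one_pow]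

theorem isNonpower_map_subtype (P : Sylow p G) [(P : Subgroup G).Normal]
    [(P : Subgroup G).FiniteIndex] {N : Subgroup P} (hN : N ≠ ⊤) (hNp : ¬ N ≤ powSub P p) :
    IsNonpower (N.map (P : Subgroup G).subtype) := by
  rintro ⟨d, -, hd⟩
  have hinj := (P : Subgroup G).subtype_injective
  by_cases hpd : p ∣ d
  · refine hNp ((map_le_map_iff_of_injective hinj).mp ?_)
    rw [hd]
    refine (closure_le _).mpr ?_
    rintro _ ⟨g, rfl⟩
    have hg : g ^ d ∈ (P : Subgroup G) := map_subtype_le N (hd ▸ pow_mem_powSub g d)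
    obtain ⟨x, hx, hxg⟩ := P.exists_pow_prime_eq_pow hpd hg
    exact ⟨⟨x, hx⟩ ^ p, pow_mem_powSub _ _, by simp [hxg]⟩
  · refine hN (top_unique ((map_le_map_iff_of_injective hinj).mp ?_))
    rw [hd, ← MonoidHom.range_eq_map, range_subtype]
    exact P.isPGroup'.le_powSub ((Nat.Prime.coprime_iff_not_dvd Fact.out).mpr hpd)

theorem three_le_nps_of_not_isCyclic [Finite G] (P : Sylow p G) [(P : Subgroup G).Normal]
    (hP : ¬ IsCyclic P) : 3 ≤ nps G := by
  obtain ⟨N₁, N₂, N₃, h₁, h₂, h₃, h₁₂, h₁₃, h₂₃⟩ :=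
    exists_three_ne_top_not_le (P.isPGroup'.zpowers_sup_powSub_ne_top hP)
  have hinj := map_injective (P : Subgroup G).subtype_injective
  exact three_le_nps (P.isNonpower_map_subtype h₁.1 h₁.2) (P.isNonpower_map_subtype h₂.1 h₂.2)
    (P.isNonpower_map_subtype h₃.1 h₃.2) (hinj.ne h₁₂) (hinj.ne h₁₃) (hinj.ne h₂₃)

theorem normal_of_normal [Finite (Sylow p G)] (P Q : Sylow p G) (hQ : (Q : Subgroup G).Normal) :
    (P : Subgroup G).Normal :=
  have := unique_of_normal Q hQ
  normal_of_subsingleton P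

theorem three_le_card_of_not_normal [Finite (Sylow p G)] (P : Sylow p G)
    (hP : ¬ (P : Subgroup G).Normal) : 3 ≤ Nat.card (Sylow p G) := by
  have hp : p.Prime := Fact.out
  have hne : Nat.card (Sylow p G) ≠ 1 := fun h =>
    hP (have := (Nat.card_eq_one_iff_unique.mp h).1; normal_of_subsingleton P)
  have hpos : 0 < Nat.card (Sylow p G) := Nat.card_pos
  have hdvd : p ∣ Nat.card (Sylow p G) - 1 :=
    (Nat.modEq_iff_dvd' hpos).mp (card_sylow_modEq_one p G).symm
  have := Nat.le_of_dvd (by omega) hdvd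
  have := hp.two_le
  omega

theorem three_le_nps_of_not_normal [Finite G] (P : Sylow p G) (hP : ¬ (P : Subgroup G).Normal) :
    3 ≤ nps G :=
  (P.three_le_card_of_not_normal hP).trans <|
    Nat.card_le_card_of_injective
      (fun Q => ⟨Q, IsNonpower.of_not_normal fun hQ => hP (P.normal_of_normal Q hQ)⟩)
      fun _ _ h => Sylow.ext (congrArg Subtype.val h)

end Sylow

theorem noncyclic_three_nonpower (G : Type*) [Group G] [Finite G]
    (h : ¬ IsCyclic G) : 3 ≤ nps G := by
  by_cases hnormal : ∀ (p : ℕ) (_ : Fact p.Prime) (P : Sylow p G), (P : Subgroup G).Normal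
  · have : Group.IsNilpotent G := (Group.isNilpotent_of_finite_tfae.out 0 3).mpr hnormal
    have hZ : ¬ IsZGroup G := fun _ => h inferInstance
    obtain ⟨p, hp, P, hP⟩ : ∃ p, p.Prime ∧ ∃ P : Sylow p G, ¬ IsCyclic P := by
      simpa [isZGroup_iff] using hZ
    have := Fact.mk hp
    have := hnormal p this P
    exact P.three_le_nps_of_not_isCyclic hP
  · push Not at hnormal
    obtain ⟨p, _, P, hP⟩ := hnormal
    exact P.three_le_nps_of_not_normal hP
end

section
/- Let G be a finite group with exponent e, let p be a prime, and let m be a positive divisor of e. If the power subgroup G^m is cyclic of order p^k, then m = e / p^k. In particular, for each k, G has at most one cyclic power subgroup of order p^k. -/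
/-- Key lemma: if `G^m` is cyclic of order `p^k` and `m ∣ e`, then `m * p^k = e`. -/
lemma key {G : Type*} [Group G] [Finite G] (p m k : ℕ) (hp : p.Prime) (hm : 0 < m)
    (hdvd : m ∣ Monoid.exponent G) (hcyc : IsCyclic (powSub G m))
    (hcard : Nat.card (powSub G m) = p ^ k) : m * p ^ k = Monoid.exponent G := by
  set e := Monoid.exponent G with he
  set P := powSub G m with hP
  have hmemP : ∀ g : G, g ^ m ∈ P := fun g => Subgroup.subset_closure ⟨g, rfl⟩
  -- every element of P raised to p^k is 1
  have hPpow : ∀ x : P, x ^ (p ^ k) = 1 := by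
    intro x
    rw [← hcard]
    exact pow_card_eq_one'
  -- Step A : e ∣ m * p^k
  have hA : e ∣ m * p ^ k := by
    apply Monoid.exponent_dvd_of_forall_pow_eq_one
    intro g
    have h2 : (g ^ m) ^ (p ^ k) = 1 := by
      simpa using congrArg Subtype.val (hPpow ⟨g ^ m, hmemP g⟩)
    rw [pow_mul]; exact h2
  -- Step B : m * p^k ∣ e
  have hB : m * p ^ k ∣ e := by
    rcases Nat.eq_zero_or_pos k with hk0 | hk1
    · simpa [hk0] using hdvd
    -- exists g with (g^m) of order p^k
    have hex : ∃ g : G, ¬ (g ^ m) ^ (p ^ (k - 1)) = 1 := by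
      by_contra hall
      push_neg at hall
      letI : CommGroup P := IsCyclic.commGroup
      have hforall : ∀ x ∈ P, x ^ (p ^ (k - 1)) = 1 := by
        intro x hx
        rw [hP, powSub] at hx
        induction hx using Subgroup.closure_induction with
        | mem x hx => obtain ⟨g, rfl⟩ := hx; exact hall g
        | one => exact one_pow _
        | mul x y hx hy ihx ihy =>
          have hx' : x ∈ P := by rw [hP, powSub]; exact hx
          have hy' : y ∈ P := by rw [hP, powSub]; exact hy
          have hcomm : x * y = y * x := by
            have := mul_comm (⟨x, hx'⟩ : P) (⟨y, hy'⟩ : P)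
            exact congrArg Subtype.val this
          have := Commute.mul_pow (hcomm) (p ^ (k - 1))
          rw [this, ihx, ihy, one_mul]
        | inv x hx ihx => rw [inv_pow, ihx, inv_one]
      obtain ⟨z, hz⟩ := hcyc.exists_generator
      have hordz : orderOf z = p ^ k := by
        rw [orderOf_eq_card_of_forall_mem_zpowers hz, hcard]
      have hz1 : z ^ (p ^ (k - 1)) = 1 := by
        have := hforall (z : G) z.2
        ext
        rw [SubgroupClass.coe_pow, this]; rfl
      have hdvd' : p ^ k ∣ p ^ (k - 1) := hordz ▸ orderOf_dvd_of_pow_eq_one hz1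
      have := Nat.pow_dvd_pow_iff_le_right hp.one_lt |>.mp hdvd'
      omega
    obtain ⟨g, hg⟩ := hex
    have hord_dvd : orderOf (g ^ m) ∣ p ^ k := by
      apply orderOf_dvd_of_pow_eq_one
      simpa using congrArg Subtype.val (hPpow ⟨g ^ m, hmemP g⟩)
    have hord : orderOf (g ^ m) = p ^ k := by
      obtain ⟨j, hj, hje⟩ := (Nat.dvd_prime_pow hp).mp hord_dvd
      rcases Nat.lt_or_ge j k with hjk | hjk
      · exfalso
        apply hg
        apply orderOf_dvd_iff_pow_eq_one.mp
        rw [hje]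
        exact pow_dvd_pow p (by omega)
      · rw [hje, Nat.le_antisymm hj hjk]
    -- now use factorization
    set c := orderOf g with hc
    have hc0 : c ≠ 0 := (orderOf_pos g).ne'
    have hcgcd : c = Nat.gcd c m * p ^ k := by
      have h1 : orderOf (g ^ m) = c / Nat.gcd c m := orderOf_pow g
      rw [hord] at h1
      rw [h1, Nat.mul_div_cancel' (Nat.gcd_dvd_left c m)]
    have hce : c ∣ e := Monoid.order_dvd_exponent g
    have he0 : e ≠ 0 := Monoid.exponent_ne_zero_of_finite
    have hm0 : m ≠ 0 := hm.ne'
    have hpk0 : p ^ k ≠ 0 := (pow_pos hp.pos k).ne'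
    rw [← Nat.factorization_le_iff_dvd (by positivity) he0]
    rw [Nat.factorization_mul hm0 hpk0]
    intro q
    simp only [Finsupp.add_apply, Finsupp.coe_add, Pi.add_apply]
    by_cases hqp : q = p
    case pos =>
      rw [hqp]
      have hkf : (p ^ k).factorization p = k := by
        rw [hp.factorization_pow]; simp
      rw [hkf]
      have h1 : c.factorization p = (Nat.gcd c m).factorization p + k := by
        conv_lhs => rw [hcgcd]
        rw [Nat.factorization_mul (fun h => hc0 ((Nat.gcd_eq_zero_iff.mp h).1)) hpk0, hp.factorization_pow]
        simp
      have hgf : (Nat.gcd c m).factorization p = min (c.factorization p) (m.factorization p) := by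
        rw [Nat.factorization_gcd hc0 hm0]; rfl
      rw [hgf] at h1
      have h2 : m.factorization p + k ≤ c.factorization p := by omega
      calc m.factorization p + k ≤ c.factorization p := h2
        _ ≤ e.factorization p := (Nat.factorization_le_iff_dvd hc0 he0).mpr hce p
    · have hkf : (p ^ k).factorization q = 0 := by
        rw [hp.factorization_pow]; simp [Ne.symm hqp]
      rw [hkf, add_zero]
      exact (Nat.factorization_le_iff_dvd hm0 he0).mpr hdvd q
  exact Nat.dvd_antisymm hB hA

lemma powSub_gcd {G : Type*} [Group G] [Finite G] (m : ℕ) :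
    powSub G m = powSub G (Nat.gcd m (Monoid.exponent G)) := by
  set e := Monoid.exponent G with he
  set d := Nat.gcd m e with hd
  apply le_antisymm
  · -- each g^m is a d-th power
    apply Subgroup.closure_le _ |>.mpr
    rintro x ⟨g, rfl⟩
    exact Subgroup.subset_closure ⟨g ^ (m / d), by rw [← pow_mul, Nat.div_mul_cancel (Nat.gcd_dvd_left m e)]⟩
  · apply Subgroup.closure_le _ |>.mpr
    rintro x ⟨g, rfl⟩
    have hbez : (d : ℤ) = m * Nat.gcdA m e + e * Nat.gcdB m e := Nat.gcd_eq_gcd_ab m e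
    have hge : g ^ (e : ℤ) = 1 := by
      rw [zpow_natCast]
      exact Monoid.pow_exponent_eq_one g
    have hkey : g ^ (d : ℤ) = (g ^ m) ^ Nat.gcdA m e := by
      rw [hbez, zpow_add, zpow_mul, zpow_mul, hge, one_zpow, mul_one, zpow_natCast]
    have hmem : g ^ m ∈ powSub G m := Subgroup.subset_closure ⟨g, rfl⟩
    have hmem2 := (powSub G m).zpow_mem hmem (Nat.gcdA m e)
    rw [← hkey, zpow_natCast] at hmem2
    exact hmem2


theorem cyclic_power_subgroup_unique (G : Type*) [Group G] [Finite G]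
    (p m k : ℕ) (hp : p.Prime) (hm : 0 < m) (hdvd : m ∣ Monoid.exponent G)
    (hcyc : IsCyclic (powSub G m)) (hcard : Nat.card (powSub G m) = p ^ k) :
    m = Monoid.exponent G / p ^ k ∧
    ∀ k' : ℕ, ∀ H₁ H₂ : Subgroup G,
      (∃ m₁ : ℕ, 0 < m₁ ∧ H₁ = powSub G m₁) → IsCyclic H₁ → Nat.card H₁ = p ^ k' →
      (∃ m₂ : ℕ, 0 < m₂ ∧ H₂ = powSub G m₂) → IsCyclic H₂ → Nat.card H₂ = p ^ k' →
      H₁ = H₂ := by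
  have hpk0 : ∀ k' : ℕ, 0 < p ^ k' := fun k' => pow_pos hp.pos k'
  constructor
  · have hkey := key p m k hp hm hdvd hcyc hcard
    rw [← hkey, Nat.mul_div_cancel _ (hpk0 k)]
  · intro k' H₁ H₂ h1 hcyc1 hcard1 h2 hcyc2 hcard2
    obtain ⟨m₁, hm₁, rfl⟩ := h1
    obtain ⟨m₂, hm₂, rfl⟩ := h2
    have he0 : Monoid.exponent G ≠ 0 := Monoid.exponent_ne_zero_of_finite
    have hg1 : 0 < Nat.gcd m₁ (Monoid.exponent G) :=
      Nat.gcd_pos_of_pos_right _ (Nat.pos_of_ne_zero he0)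
    have hg2 : 0 < Nat.gcd m₂ (Monoid.exponent G) :=
      Nat.gcd_pos_of_pos_right _ (Nat.pos_of_ne_zero he0)
    have e1 := powSub_gcd (G := G) m₁
    have e2 := powSub_gcd (G := G) m₂
    have k1 := key p (Nat.gcd m₁ (Monoid.exponent G)) k' hp hg1 (Nat.gcd_dvd_right _ _)
      (e1 ▸ hcyc1) (e1 ▸ hcard1)
    have k2 := key p (Nat.gcd m₂ (Monoid.exponent G)) k' hp hg2 (Nat.gcd_dvd_right _ _)
      (e2 ▸ hcyc2) (e2 ▸ hcard2)
    have : Nat.gcd m₁ (Monoid.exponent G) = Nat.gcd m₂ (Monoid.exponent G) :=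
      Nat.eq_of_mul_eq_mul_right (hpk0 k') (k1.trans k2.symm)
    rw [e1, e2, this]
end

section
/- If A and B are finite groups with coprime orders, then the number of power subgroups of A × B equals the product of the numbers of power subgroups of A and of B, and the number of nonpower subgroups of A × B equals nps(A)·s(B) + ps(A)·nps(B), where s(B) is the total number of subgroups of B, ps denotes the number of power subgroups, and nps the number of nonpower subgroups. -/
section Aux

variable {G : Type*} [Group G] [Finite G]

lemma pow_congr_card {m n : ℕ} (hmn : m ≡ n [MOD Nat.card G]) (g : G) : g ^ m = g ^ n :=
  pow_eq_pow_iff_modEq.mpr (hmn.of_dvd (orderOf_dvd_natCard g))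

lemma powSub_congr {m n : ℕ} (hmn : m ≡ n [MOD Nat.card G]) :
    powSub G m = powSub G n := by
  unfold powSub
  congr 1
  ext x
  constructor <;> rintro ⟨g, rfl⟩ <;> exact ⟨g, by rw [pow_congr_card hmn]⟩

variable {A B : Type*} [Group A] [Group B] [Finite A] [Finite B]

lemma powSub_prod (m : ℕ) :
    powSub (A × B) m = (powSub A m).prod (powSub B m) := by
  unfold powSub
  have hs : (1 : A) ∈ {x : A | ∃ g : A, g ^ m = x} := ⟨1, one_pow m⟩
  have ht : (1 : B) ∈ {x : B | ∃ g : B, g ^ m = x} := ⟨1, one_pow m⟩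
  rw [← Subgroup.closure_prod hs ht]
  congr 1
  ext ⟨a, b⟩
  constructor
  · rintro ⟨⟨g1, g2⟩, hg⟩
    rw [Prod.pow_mk] at hg
    exact ⟨⟨g1, congrArg Prod.fst hg⟩, ⟨g2, congrArg Prod.snd hg⟩⟩
  · rintro ⟨⟨g1, h1⟩, ⟨g2, h2⟩⟩
    exact ⟨(g1, g2), by rw [Prod.pow_mk, h1, h2]⟩

lemma subgroup_eq_prod (h : Nat.Coprime (Nat.card A) (Nat.card B)) (H : Subgroup (A × B)) :
    H = (H.map (MonoidHom.fst A B)).prod (H.map (MonoidHom.snd A B)) := by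
  apply le_antisymm
  · intro x hx
    exact ⟨⟨x, hx, rfl⟩, ⟨x, hx, rfl⟩⟩
  · rintro ⟨a, b⟩ ⟨⟨⟨a', b'⟩, hab', ha⟩, ⟨⟨a'', b''⟩, hab'', hb⟩⟩
    simp only [MonoidHom.coe_fst, MonoidHom.coe_snd] at ha hb
    subst ha hb
    obtain ⟨k, hk1, hk2⟩ := Nat.chineseRemainder h 1 0
    obtain ⟨l, hl1, hl2⟩ := Nat.chineseRemainder h 0 1
    have h1 : ((a', b') : A × B) ^ k = (a', 1) := by
      rw [Prod.pow_mk, pow_congr_card hk1, pow_congr_card hk2, pow_one, pow_zero]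
    have h2 : ((a'', b'') : A × B) ^ l = (1, b'') := by
      rw [Prod.pow_mk, pow_congr_card hl1, pow_congr_card hl2, pow_one, pow_zero]
    have := mul_mem (h1 ▸ pow_mem hab' k) (h2 ▸ pow_mem hab'' l)
    simpa using this

lemma map_fst_prod (H : Subgroup A) (K : Subgroup B) :
    (H.prod K).map (MonoidHom.fst A B) = H := by
  ext a
  constructor
  · rintro ⟨⟨a', b'⟩, ⟨h1, _⟩, rfl⟩; exact h1
  · intro ha; exact ⟨(a, 1), ⟨ha, one_mem K⟩, rfl⟩

lemma map_snd_prod (H : Subgroup A) (K : Subgroup B) :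
    (H.prod K).map (MonoidHom.snd A B) = K := by
  ext b
  constructor
  · rintro ⟨⟨a', b'⟩, ⟨_, h2⟩, rfl⟩; exact h2
  · intro hb; exact ⟨(1, b), ⟨one_mem H, hb⟩, rfl⟩

noncomputable def subgroupProdEquiv (h : Nat.Coprime (Nat.card A) (Nat.card B)) :
    Subgroup (A × B) ≃ Subgroup A × Subgroup B where
  toFun H := (H.map (MonoidHom.fst A B), H.map (MonoidHom.snd A B))
  invFun p := p.1.prod p.2
  left_inv H := (subgroup_eq_prod h H).symm
  right_inv p := by simp [map_fst_prod, map_snd_prod]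

lemma isPower_iff (h : Nat.Coprime (Nat.card A) (Nat.card B)) (H : Subgroup (A × B)) :
    (∃ m : ℕ, 0 < m ∧ H = powSub (A × B) m) ↔
      (∃ m : ℕ, 0 < m ∧ H.map (MonoidHom.fst A B) = powSub A m) ∧
      (∃ m : ℕ, 0 < m ∧ H.map (MonoidHom.snd A B) = powSub B m) := by
  constructor
  · rintro ⟨m, hm, rfl⟩
    rw [powSub_prod, map_fst_prod, map_snd_prod]
    exact ⟨⟨m, hm, rfl⟩, ⟨m, hm, rfl⟩⟩
  · rintro ⟨⟨m, hm, hA⟩, ⟨n, hn, hB⟩⟩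
    obtain ⟨k, hk1, hk2⟩ := Nat.chineseRemainder h m n
    have hcA : 0 < Nat.card A := Nat.card_pos
    have hcB : 0 < Nat.card B := Nat.card_pos
    refine ⟨k + Nat.card A * Nat.card B, by positivity, ?_⟩
    have e1 : k + Nat.card A * Nat.card B ≡ m [MOD Nat.card A] :=
      ((Nat.modEq_iff_dvd' (Nat.le_add_right k _)).mpr ⟨Nat.card B, by omega⟩).symm.trans hk1
    have e2 : k + Nat.card A * Nat.card B ≡ n [MOD Nat.card B] :=
      ((Nat.modEq_iff_dvd' (Nat.le_add_right k _)).mpr ⟨Nat.card A, by rw [Nat.add_sub_cancel_left]; ring⟩).symm.trans hk2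
    rw [powSub_prod, powSub_congr e1, powSub_congr e2, ← hA, ← hB]
    exact subgroup_eq_prod h H

lemma card_split (G : Type*) [Group G] [Finite G] :
    numSubgroups G = ps G + nps G := by
  classical
  rw [numSubgroups, ps, nps]
  unfold IsNonpower
  rw [← Nat.card_sum]
  exact (Nat.card_congr (Equiv.sumCompl _)).symm

end Aux

theorem nps_prod_coprime (A B : Type*) [Group A] [Group B] [Finite A] [Finite B]
    (h : Nat.Coprime (Nat.card A) (Nat.card B)) :
    ps (A × B) = ps A * ps B ∧
    nps (A × B) = nps A * numSubgroups B + ps A * nps B := by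
  classical
  have hps : ps (A × B) = ps A * ps B := by
    rw [ps, ps, ps, ← Nat.card_prod]
    exact Nat.card_congr
      (((subgroupProdEquiv h).subtypeEquiv (isPower_iff h)).trans Equiv.subtypeProdEquivProd)
  have hcard : numSubgroups (A × B) = numSubgroups A * numSubgroups B := by
    rw [numSubgroups, numSubgroups, numSubgroups, ← Nat.card_prod]
    exact Nat.card_congr (subgroupProdEquiv h)
  refine ⟨hps, ?_⟩
  have key : ps (A × B) + nps (A × B) =
      ps (A × B) + (nps A * numSubgroups B + ps A * nps B) := by
    rw [← card_split (A × B), hcard, hps, card_split A, card_split B]; ring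
  exact Nat.add_left_cancel key
end

section
/- Let G be a group with subgroups N and H where N is normal in G. If the subgroup HN/N is a nonpower subgroup of G/N, then H is a nonpower subgroup of G. Consequently, the number of nonpower subgroups of G is at least the number of nonpower subgroups of G/N. -/
theorem nonpower_of_quotient_nonpower (G : Type*) [Group G] [Finite G]
    (N H : Subgroup G) (hN : N.Normal)
    (h : IsNonpower (H.map (QuotientGroup.mk' N))) :
    IsNonpower H ∧ nps (G ⧸ N) ≤ nps G := by
  have hsurj : Function.Surjective (QuotientGroup.mk' N) := QuotientGroup.mk'_surjective N
  have key : ∀ m : ℕ, (powSub G m).map (QuotientGroup.mk' N) = powSub (G ⧸ N) m := by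
    intro m
    rw [powSub, MonoidHom.map_closure, powSub]
    congr 1
    ext y
    constructor
    · rintro ⟨x, ⟨g, rfl⟩, rfl⟩
      exact ⟨QuotientGroup.mk' N g, (map_pow _ _ _).symm⟩
    · rintro ⟨g, rfl⟩
      obtain ⟨x, rfl⟩ := hsurj g
      exact ⟨x ^ m, ⟨x, rfl⟩, map_pow _ _ _⟩
  have main : ∀ K : Subgroup G, IsNonpower (K.map (QuotientGroup.mk' N)) → IsNonpower K := by
    rintro K hK ⟨m, hm, rfl⟩
    exact hK ⟨m, hm, key m⟩
  refine ⟨main H h, ?_⟩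
  have hinj : Function.Injective
      (fun K : {K : Subgroup (G ⧸ N) // IsNonpower K} =>
        (⟨(K : Subgroup (G ⧸ N)).comap (QuotientGroup.mk' N), by
          apply main
          rw [Subgroup.map_comap_eq_self_of_surjective hsurj]
          exact K.2⟩ : {H : Subgroup G // IsNonpower H})) := by
    rintro ⟨K₁, h₁⟩ ⟨K₂, h₂⟩ hEq
    simp only [Subtype.mk.injEq] at hEq ⊢
    exact Subgroup.comap_injective hsurj hEq
  exact Nat.card_le_card_of_injective _ hinj
end

section
/- The quaternion group Q_8 has exactly 3 nonpower subgroups. -/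
namespace NpsQ8
open QuaternionGroup

abbrev G := QuaternionGroup 2




def Zc : Subgroup G where
  carrier := {a 0, a 2}
  mul_mem' := by decide
  one_mem' := by decide
  inv_mem' := by decide

def K1 : Subgroup G where
  carrier := {a 0, a 1, a 2, a 3}
  mul_mem' := by decide
  one_mem' := by decide
  inv_mem' := by decide

def K2 : Subgroup G where
  carrier := {a 0, a 2, xa 0, xa 2}
  mul_mem' := by decide
  one_mem' := by decide
  inv_mem' := by decide

def K3 : Subgroup G where
  carrier := {a 0, a 2, xa 1, xa 3}
  mul_mem' := by decide
  one_mem' := by decide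
  inv_mem' := by decide

lemma mem_Zc (x : G) : x ∈ Zc ↔ x ∈ ({a 0, a 2} : Set G) := Iff.rfl
lemma mem_K1 (x : G) : x ∈ K1 ↔ x ∈ ({a 0, a 1, a 2, a 3} : Set G) := Iff.rfl
lemma mem_K2 (x : G) : x ∈ K2 ↔ x ∈ ({a 0, a 2, xa 0, xa 2} : Set G) := Iff.rfl
lemma mem_K3 (x : G) : x ∈ K3 ↔ x ∈ ({a 0, a 2, xa 1, xa 3} : Set G) := Iff.rfl

lemma pow4 (g : G) : g ^ 4 = 1 := by revert g; decide

lemma pow_mod (g : G) (m : ℕ) : g ^ m = g ^ (m % 4) := by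
  conv_lhs => rw [← Nat.mod_add_div m 4, pow_add, pow_mul, pow4, one_pow, mul_one]

lemma powSub_mod (m : ℕ) : powSub G m = powSub G (m % 4) := by
  unfold powSub
  congr 1
  ext x
  simp only [Set.mem_setOf_eq]
  constructor
  · rintro ⟨g, rfl⟩; exact ⟨g, (pow_mod g m).symm⟩
  · rintro ⟨g, rfl⟩; exact ⟨g, pow_mod g m⟩

lemma powSub_zero : powSub G 0 = ⊥ := by
  unfold powSub
  have h : {x : G | ∃ g : G, g ^ 0 = x} = {1} := Set.ext (by decide)
  rw [h, Subgroup.closure_singleton_one]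

lemma powSub_one : powSub G 1 = ⊤ := by
  unfold powSub
  have h : {x : G | ∃ g : G, g ^ 1 = x} = Set.univ := Set.ext (by decide)
  rw [h, Subgroup.closure_univ]

lemma powSub_three : powSub G 3 = ⊤ := by
  unfold powSub
  have h : {x : G | ∃ g : G, g ^ 3 = x} = Set.univ := Set.ext (by decide)
  rw [h, Subgroup.closure_univ]

lemma powSub_two : powSub G 2 = Zc := by
  unfold powSub
  have h : {x : G | ∃ g : G, g ^ 2 = x} = ({a 0, a 2} : Set G) := Set.ext (by decide)
  rw [h]
  exact Subgroup.closure_eq Zc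

lemma power_iff (H : Subgroup G) :
    (∃ m : ℕ, 0 < m ∧ H = powSub G m) ↔ (H = ⊥ ∨ H = Zc ∨ H = ⊤) := by
  constructor
  · rintro ⟨m, -, rfl⟩
    rw [powSub_mod]
    have h4 : m % 4 < 4 := Nat.mod_lt _ (by norm_num)
    interval_cases (m % 4)
    · exact Or.inl powSub_zero
    · exact Or.inr (Or.inr powSub_one)
    · exact Or.inr (Or.inl powSub_two)
    · exact Or.inr (Or.inr powSub_three)
  · rintro (rfl | rfl | rfl)
    · exact ⟨4, by norm_num, by rw [powSub_mod]; exact powSub_zero.symm⟩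
    · exact ⟨2, by norm_num, powSub_two.symm⟩
    · exact ⟨1, by norm_num, powSub_one.symm⟩

section classify
variable {H : Subgroup G}

lemma a_mem (h1 : a 1 ∈ H) (i : ZMod (2 * 2)) : a i ∈ H := by
  have := pow_mem h1 i.val
  rwa [a_one_pow, ZMod.natCast_zmod_val] at this

lemma xa_shift (i j : ZMod (2 * 2)) : xa i * a j = xa (i + j) := xa_mul_a i j

lemma xa_not_mem (h1 : a 1 ∈ H) (hx0 : xa 0 ∉ H) (i : ZMod (2 * 2)) : xa i ∉ H := fun h => by
  have := mul_mem h (a_mem h1 (-i))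
  rw [xa_mul_a, add_neg_cancel] at this
  exact hx0 this

lemma subgroup_cases (H : Subgroup G) :
    H = ⊥ ∨ H = Zc ∨ H = K1 ∨ H = K2 ∨ H = K3 ∨ H = ⊤ := by
  by_cases h1 : (a 1 : G) ∈ H
  · by_cases hx0 : (xa 0 : G) ∈ H
    · -- top
      refine Or.inr (Or.inr (Or.inr (Or.inr (Or.inr ?_))))
      rw [Subgroup.eq_top_iff']
      rintro (i | i)
      · exact a_mem h1 i
      · have := mul_mem hx0 (a_mem h1 i)
        rwa [xa_mul_a, zero_add] at this
    · by_cases hx1 : (xa 1 : G) ∈ H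
      · exfalso
        apply hx0
        have := mul_mem hx1 (a_mem h1 (-1))
        rwa [xa_mul_a, add_neg_cancel] at this
      · -- K1
        refine Or.inr (Or.inr (Or.inl ?_))
        ext g
        rcases g with i | i
        · exact iff_of_true (a_mem h1 i) (by rw [mem_K1]; revert i; decide)
        · exact iff_of_false (xa_not_mem h1 hx0 i) (by rw [mem_K1]; revert i; decide)
  · have h3 : (a 3 : G) ∉ H := fun h => h1 (by
      have := inv_mem h
      rwa [show (a 3 : G)⁻¹ = a 1 by decide] at this)
    by_cases hx0 : (xa 0 : G) ∈ H
    · by_cases hx1 : (xa 1 : G) ∈ H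
      · exfalso
        have h2 : (xa 2 : G) ∈ H := by
          have := inv_mem hx0
          rwa [show (xa 0 : G)⁻¹ = xa 2 by decide] at this
        have := mul_mem hx1 h2
        rw [show (xa 1 : G) * xa 2 = a 3 by decide] at this
        exact h3 this
      · -- K2
        refine Or.inr (Or.inr (Or.inr (Or.inl ?_)))
        have ha2 : (a 2 : G) ∈ H := by
          have := mul_mem hx0 hx0
          rwa [show (xa 0 : G) * xa 0 = a 2 by decide] at this
        have hxa2 : (xa 2 : G) ∈ H := by
          have := inv_mem hx0
          rwa [show (xa 0 : G)⁻¹ = xa 2 by decide] at this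
        have hxa3 : (xa 3 : G) ∉ H := fun h => hx1 (by
          have := inv_mem h
          rwa [show (xa 3 : G)⁻¹ = xa 1 by decide] at this)
        ext g
        rcases g with i | i <;> fin_cases i
        · exact iff_of_true (one_mem H) (by rw [mem_K2]; decide)
        · exact iff_of_false h1 (by rw [mem_K2]; decide)
        · exact iff_of_true ha2 (by rw [mem_K2]; decide)
        · exact iff_of_false h3 (by rw [mem_K2]; decide)
        · exact iff_of_true hx0 (by rw [mem_K2]; decide)
        · exact iff_of_false hx1 (by rw [mem_K2]; decide)
        · exact iff_of_true hxa2 (by rw [mem_K2]; decide)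
        · exact iff_of_false hxa3 (by rw [mem_K2]; decide)
    · by_cases hx1 : (xa 1 : G) ∈ H
      · -- K3
        refine Or.inr (Or.inr (Or.inr (Or.inr (Or.inl ?_))))
        have ha2 : (a 2 : G) ∈ H := by
          have := mul_mem hx1 hx1
          rwa [show (xa 1 : G) * xa 1 = a 2 by decide] at this
        have hxa3 : (xa 3 : G) ∈ H := by
          have := inv_mem hx1
          rwa [show (xa 1 : G)⁻¹ = xa 3 by decide] at this
        have hxa2 : (xa 2 : G) ∉ H := fun h => hx0 (by
          have := inv_mem h
          rwa [show (xa 2 : G)⁻¹ = xa 0 by decide] at this)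
        ext g
        rcases g with i | i <;> fin_cases i
        · exact iff_of_true (one_mem H) (by rw [mem_K3]; decide)
        · exact iff_of_false h1 (by rw [mem_K3]; decide)
        · exact iff_of_true ha2 (by rw [mem_K3]; decide)
        · exact iff_of_false h3 (by rw [mem_K3]; decide)
        · exact iff_of_false hx0 (by rw [mem_K3]; decide)
        · exact iff_of_true hx1 (by rw [mem_K3]; decide)
        · exact iff_of_false hxa2 (by rw [mem_K3]; decide)
        · exact iff_of_true hxa3 (by rw [mem_K3]; decide)
      · have hxa2 : (xa 2 : G) ∉ H := fun h => hx0 (by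
          have := inv_mem h
          rwa [show (xa 2 : G)⁻¹ = xa 0 by decide] at this)
        have hxa3 : (xa 3 : G) ∉ H := fun h => hx1 (by
          have := inv_mem h
          rwa [show (xa 3 : G)⁻¹ = xa 1 by decide] at this)
        by_cases ha2 : (a 2 : G) ∈ H
        · -- Zc
          refine Or.inr (Or.inl ?_)
          ext g
          rcases g with i | i <;> fin_cases i
          · exact iff_of_true (one_mem H) (by rw [mem_Zc]; decide)
          · exact iff_of_false h1 (by rw [mem_Zc]; decide)
          · exact iff_of_true ha2 (by rw [mem_Zc]; decide)
          · exact iff_of_false h3 (by rw [mem_Zc]; decide)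
          · exact iff_of_false hx0 (by rw [mem_Zc]; decide)
          · exact iff_of_false hx1 (by rw [mem_Zc]; decide)
          · exact iff_of_false hxa2 (by rw [mem_Zc]; decide)
          · exact iff_of_false hxa3 (by rw [mem_Zc]; decide)
        · -- bot
          refine Or.inl ?_
          ext g
          rw [Subgroup.mem_bot]
          rcases g with i | i <;> fin_cases i
          · exact iff_of_true (one_mem H) (by decide)
          · exact iff_of_false h1 (by decide)
          · exact iff_of_false ha2 (by decide)
          · exact iff_of_false h3 (by decide)
          · exact iff_of_false hx0 (by decide)
          · exact iff_of_false hx1 (by decide)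
          · exact iff_of_false hxa2 (by decide)
          · exact iff_of_false hxa3 (by decide)

end classify

end NpsQ8


namespace NpsQ8
open QuaternionGroup

lemma K1_mem_a1 : (a 1 : G) ∈ K1 := by rw [mem_K1]; decide
lemma K1_ne_bot : K1 ≠ ⊥ := fun h => by
  have := K1_mem_a1; rw [h, Subgroup.mem_bot] at this; exact (by decide : (a 1 : G) ≠ 1) this
lemma K1_ne_Zc : K1 ≠ Zc := fun h => by
  have := K1_mem_a1; rw [h, mem_Zc] at this; exact (by decide : (a 1 : G) ∉ ({a 0, a 2} : Set G)) this
lemma K1_ne_top : K1 ≠ ⊤ := fun h => by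
  have : (xa 0 : G) ∈ K1 := by rw [h]; trivial
  rw [mem_K1] at this; exact (by decide : (xa 0 : G) ∉ ({a 0, a 1, a 2, a 3} : Set G)) this
lemma K2_ne_bot : K2 ≠ ⊥ := fun h => by
  have : (xa 0 : G) ∈ K2 := by rw [mem_K2]; decide
  rw [h, Subgroup.mem_bot] at this; exact (by decide : (xa 0 : G) ≠ 1) this
lemma K2_ne_Zc : K2 ≠ Zc := fun h => by
  have : (xa 0 : G) ∈ K2 := by rw [mem_K2]; decide
  rw [h, mem_Zc] at this; exact (by decide : (xa 0 : G) ∉ ({a 0, a 2} : Set G)) this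
lemma K2_ne_top : K2 ≠ ⊤ := fun h => by
  have : (a 1 : G) ∈ K2 := by rw [h]; trivial
  rw [mem_K2] at this; exact (by decide : (a 1 : G) ∉ ({a 0, a 2, xa 0, xa 2} : Set G)) this
lemma K3_ne_bot : K3 ≠ ⊥ := fun h => by
  have : (xa 1 : G) ∈ K3 := by rw [mem_K3]; decide
  rw [h, Subgroup.mem_bot] at this; exact (by decide : (xa 1 : G) ≠ 1) this
lemma K3_ne_Zc : K3 ≠ Zc := fun h => by
  have : (xa 1 : G) ∈ K3 := by rw [mem_K3]; decide
  rw [h, mem_Zc] at this; exact (by decide : (xa 1 : G) ∉ ({a 0, a 2} : Set G)) this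
lemma K3_ne_top : K3 ≠ ⊤ := fun h => by
  have : (a 1 : G) ∈ K3 := by rw [h]; trivial
  rw [mem_K3] at this; exact (by decide : (a 1 : G) ∉ ({a 0, a 2, xa 1, xa 3} : Set G)) this
lemma K1_ne_K2 : K1 ≠ K2 := fun h => by
  have := K1_mem_a1; rw [h, mem_K2] at this
  exact (by decide : (a 1 : G) ∉ ({a 0, a 2, xa 0, xa 2} : Set G)) this
lemma K1_ne_K3 : K1 ≠ K3 := fun h => by
  have := K1_mem_a1; rw [h, mem_K3] at this
  exact (by decide : (a 1 : G) ∉ ({a 0, a 2, xa 1, xa 3} : Set G)) this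
lemma K2_ne_K3 : K2 ≠ K3 := fun h => by
  have : (xa 0 : G) ∈ K2 := by rw [mem_K2]; decide
  rw [h, mem_K3] at this
  exact (by decide : (xa 0 : G) ∉ ({a 0, a 2, xa 1, xa 3} : Set G)) this

lemma nonpower_iff (H : Subgroup G) : IsNonpower H ↔ H = K1 ∨ H = K2 ∨ H = K3 := by
  rw [IsNonpower, power_iff]
  constructor
  · intro h
    rcases subgroup_cases H with rfl | rfl | rfl | rfl | rfl | rfl <;> tauto
  · rintro (rfl | rfl | rfl) <;>
      rintro (h | h | h) <;>
      first
        | exact K1_ne_bot h | exact K1_ne_Zc h | exact K1_ne_top h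
        | exact K2_ne_bot h | exact K2_ne_Zc h | exact K2_ne_top h
        | exact K3_ne_bot h | exact K3_ne_Zc h | exact K3_ne_top h

end NpsQ8

open NpsQ8

theorem nps_Q8 : nps (QuaternionGroup 2) = 3 := by
  have hset : {H : Subgroup G | IsNonpower H} = {K1, K2, K3} := by
    ext H
    simp only [Set.mem_setOf_eq, Set.mem_insert_iff, Set.mem_singleton_iff, nonpower_iff]
  have : nps (QuaternionGroup 2) = Set.ncard {H : Subgroup G | IsNonpower H} := by
    rw [nps]
    exact Nat.card_coe_set_eq {H : Subgroup G | IsNonpower H}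
  rw [this, hset,
    Set.ncard_insert_of_notMem (by
      simp only [Set.mem_insert_iff, Set.mem_singleton_iff]
      rintro (h | h); exact K1_ne_K2 h; exact K1_ne_K3 h)
      ((Set.finite_singleton K3).insert K2),
    Set.ncard_pair K2_ne_K3]
end

section
/- The dihedral group D_{2^n} of order 2^n (n ≥ 3) has exactly 2^n − 1 nonpower subgroups. -/
/-!
Every subgroup of `DihedralGroup m` is either `rotations A` or `withReflections A c` for an
additive subgroup `A ≤ ZMod m` and a coset `c` of `A`, so the subgroups containing a reflection
number `∑_A [ZMod m : A] = σ(m)`. For `m = 2^e`, `e ≥ 1`, the power subgroup `G^M` is `G` for odd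
`M` and the rotation subgroup `⟨r^M⟩ ∌ r` for even `M`, while every proper rotation subgroup
`⟨r^d⟩` equals `G^d`. So the power subgroups are `G` and the proper rotation subgroups, and
exchanging `G` with `⟨r⟩` matches the nonpower subgroups with the subgroups containing a
reflection, of which there are `σ(2^e) = 2^(e+1) - 1`.
-/

open ArithmeticFunction
open scoped ArithmeticFunction.sigma

theorem powSub_one (G : Type*) [Group G] : powSub G 1 = ⊤ := by
  simp [powSub]

namespace ZMod

variable {n : ℕ}

theorem one_notMem_zmultiples_of_even {M : ℕ} (hn : 2 ∣ n) (hM : Even M) :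
    (1 : ZMod n) ∉ AddSubgroup.zmultiples (M : ZMod n) := by
  rintro ⟨k, hk⟩
  have := congrArg (ZMod.castHom hn (ZMod 2)) hk
  rw [map_zsmul, map_natCast, map_one, ZMod.natCast_eq_zero_iff_even.mpr hM, smul_zero] at this
  exact zero_ne_one this

variable [NeZero n]

theorem index_zmultiples_natCast {d : ℕ} (hd : d ∣ n) :
    (AddSubgroup.zmultiples (d : ZMod n)).index = d := by
  have key := (AddSubgroup.zmultiples (d : ZMod n)).card_mul_index
  rw [Nat.card_zmultiples, addOrderOf_coe d (NeZero.ne n), Nat.gcd_eq_right hd, Nat.card_zmod]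
    at key
  have hpos : 0 < n / d := Nat.pos_of_ne_zero (left_ne_zero_of_mul (key.symm ▸ NeZero.ne n))
  exact Nat.eq_of_mul_eq_mul_left hpos (key.trans (Nat.div_mul_cancel hd).symm)

theorem zmultiples_index_eq (A : AddSubgroup (ZMod n)) :
    AddSubgroup.zmultiples (A.index : ZMod n) = A := by
  refine AddSubgroup.eq_of_le_of_card_ge ?_ ?_
  · rw [AddSubgroup.zmultiples_le]
    simpa using A.nsmul_index_mem 1
  · have hdvd : A.index ∣ n := by simpa using A.index_dvd_card
    have key := A.card_mul_index
    rw [← (AddSubgroup.zmultiples (A.index : ZMod n)).card_mul_index,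
      index_zmultiples_natCast hdvd] at key
    exact (Nat.eq_of_mul_eq_mul_right (Nat.pos_of_ne_zero A.index_ne_zero_of_finite) key).le

theorem sum_index_addSubgroup :
    ∑ A : AddSubgroup (ZMod n), A.index = σ 1 n := by
  rw [sigma_one_apply]
  refine Finset.sum_nbij' (·.index) (fun d => AddSubgroup.zmultiples (d : ZMod n))
    (fun A _ => ?_) (fun _ _ => Finset.mem_univ _) (fun A _ => zmultiples_index_eq A)
    (fun d hd => index_zmultiples_natCast (Nat.dvd_of_mem_divisors hd)) (fun _ _ => rfl)
  simpa [Nat.mem_divisors, NeZero.ne n] using A.index_dvd_card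

theorem even_index_of_ne_top {e : ℕ} {A : AddSubgroup (ZMod (2 ^ e))} (hA : A ≠ ⊤) :
    Even A.index := by
  obtain ⟨k, -, hk⟩ := (Nat.dvd_prime_pow Nat.prime_two).mp (by simpa using A.index_dvd_card)
  have hk0 : k ≠ 0 := by
    rintro rfl
    exact hA (AddSubgroup.index_eq_one.mp hk)
  rw [hk, Nat.even_pow]
  exact ⟨even_two, hk0⟩

end ZMod

namespace DihedralGroup

variable {m : ℕ}

def rotations (A : AddSubgroup (ZMod m)) : Subgroup (DihedralGroup m) where
  carrier := {x | match x with | r i => i ∈ A | sr _ => False}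
  one_mem' := A.zero_mem
  mul_mem' := by
    rintro (i | i) (j | j) hi hj
    · rw [r_mul_r]; exact A.add_mem hi hj
    all_goals contradiction
  inv_mem' := by
    rintro (i | i) hi
    · rw [inv_r]; exact A.neg_mem hi
    · contradiction

@[simp] theorem r_mem_rotations {A : AddSubgroup (ZMod m)} {i : ZMod m} :
    r i ∈ rotations A ↔ i ∈ A := Iff.rfl

@[simp] theorem sr_notMem_rotations (A : AddSubgroup (ZMod m)) (i : ZMod m) :
    sr i ∉ rotations A := id

def withReflections (A : AddSubgroup (ZMod m)) (c : ZMod m ⧸ A) :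
    Subgroup (DihedralGroup m) where
  carrier := {x | match x with | r i => i ∈ A | sr i => (i : ZMod m ⧸ A) = c}
  one_mem' := A.zero_mem
  mul_mem' := by
    rintro (i | i) (j | j) hi hj
    · rw [r_mul_r]; exact A.add_mem hi hj
    · show ((j - i : ZMod m) : ZMod m ⧸ A) = c
      rw [← hj, QuotientAddGroup.eq]
      simpa using hi
    · show ((i + j : ZMod m) : ZMod m ⧸ A) = c
      rw [← hi, QuotientAddGroup.eq]
      simpa using hj
    · show j - i ∈ A
      have := QuotientAddGroup.eq.mp (hi.trans hj.symm)
      simpa [sub_eq_neg_add] using this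
  inv_mem' := by
    rintro (i | i) hi
    · rw [inv_r]; exact A.neg_mem hi
    · exact hi

@[simp] theorem r_mem_withReflections {A : AddSubgroup (ZMod m)} {c : ZMod m ⧸ A}
    {i : ZMod m} : r i ∈ withReflections A c ↔ i ∈ A := Iff.rfl

@[simp] theorem sr_mem_withReflections {A : AddSubgroup (ZMod m)} {c : ZMod m ⧸ A}
    {i : ZMod m} : sr i ∈ withReflections A c ↔ (i : ZMod m ⧸ A) = c := Iff.rfl

def rotationIndices (H : Subgroup (DihedralGroup m)) : AddSubgroup (ZMod m) where
  carrier := {i | r i ∈ H}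
  zero_mem' := H.one_mem
  add_mem' {i j} hi hj := (r_mul_r i j ▸ H.mul_mem hi hj : r (i + j) ∈ H)
  neg_mem' {i} hi := (inv_r i ▸ H.inv_mem hi : r (-i) ∈ H)

@[simp] theorem mem_rotationIndices {H : Subgroup (DihedralGroup m)} {i : ZMod m} :
    i ∈ rotationIndices H ↔ r i ∈ H := Iff.rfl

theorem eq_rotations_rotationIndices {H : Subgroup (DihedralGroup m)} (hH : ∀ i, sr i ∉ H) :
    H = rotations (rotationIndices H) := by
  ext (i | i) <;> simp [hH]

theorem eq_withReflections_rotationIndices {H : Subgroup (DihedralGroup m)} {i₀ : ZMod m}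
    (hi₀ : sr i₀ ∈ H) : H = withReflections (rotationIndices H) i₀ := by
  ext (i | i)
  · rfl
  · rw [sr_mem_withReflections, QuotientAddGroup.eq, mem_rotationIndices, neg_add_eq_sub,
      ← sr_mul_sr, ← Subgroup.mul_mem_cancel_right H hi₀]

theorem withReflections_injective :
    Function.Injective
      (fun x : Σ A : AddSubgroup (ZMod m), ZMod m ⧸ A => withReflections x.1 x.2) := by
  rintro ⟨A, c⟩ ⟨A', c'⟩ h
  dsimp only at h
  obtain rfl : A = A' := by
    ext i
    simpa only [r_mem_withReflections] using SetLike.ext_iff.mp h (r i)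
  induction c using QuotientAddGroup.induction_on with | H i => ?_
  have := SetLike.ext_iff.mp h (sr i)
  simp only [sr_mem_withReflections, true_iff] at this
  rw [this]

theorem card_exists_sr_mem [NeZero m] :
    Nat.card {H : Subgroup (DihedralGroup m) // ∃ i, sr i ∈ H} =
      ∑ A : AddSubgroup (ZMod m), A.index := by
  let f (x : Σ A : AddSubgroup (ZMod m), ZMod m ⧸ A) :
      {H : Subgroup (DihedralGroup m) // ∃ i, sr i ∈ H} :=
    ⟨withReflections x.1 x.2, x.2.exists_rep.imp fun _ hi => hi⟩
  have hf : Function.Bijective f := by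
    refine ⟨fun x y h => withReflections_injective (congrArg Subtype.val h), ?_⟩
    rintro ⟨H, i₀, hi₀⟩
    exact ⟨⟨rotationIndices H, i₀⟩,
      Subtype.ext (eq_withReflections_rotationIndices hi₀).symm⟩
  rw [← Nat.card_eq_of_bijective f hf, Nat.card_sigma]
  rfl

theorem sr_pow_of_even (i : ZMod m) {M : ℕ} (hM : Even M) : sr i ^ M = 1 := by
  obtain ⟨k, rfl⟩ := hM
  rw [← two_mul, pow_mul, sq, sr_mul_self, one_pow]

theorem sr_pow_of_odd (i : ZMod m) {M : ℕ} (hM : Odd M) : sr i ^ M = sr i := by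
  obtain ⟨k, rfl⟩ := hM
  rw [pow_succ, pow_mul, sq, sr_mul_self, one_pow, one_mul]

theorem powSub_eq_rotations_of_even {M : ℕ} (hM : Even M) :
    powSub (DihedralGroup m) M = rotations (AddSubgroup.zmultiples (M : ZMod m)) := by
  apply le_antisymm
  · rw [powSub, Subgroup.closure_le]
    rintro _ ⟨i | i, rfl⟩
    · rw [SetLike.mem_coe, r_pow, r_mem_rotations, mul_comm]
      refine AddSubgroup.mem_zmultiples_iff.mpr ⟨(i.cast : ℤ), ?_⟩
      rw [zsmul_eq_mul, ZMod.intCast_zmod_cast, mul_comm]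
    · rw [SetLike.mem_coe, sr_pow_of_even i hM]
      exact one_mem _
  · rintro (i | i) hi
    · obtain ⟨k, rfl⟩ := AddSubgroup.mem_zmultiples_iff.mp hi
      refine Subgroup.subset_closure ⟨r k, ?_⟩
      rw [r_pow, zsmul_eq_mul]
    · exact absurd hi (sr_notMem_rotations _ _)

theorem powSub_eq_top_of_odd {M : ℕ} (hM : Odd M) (hcop : M.Coprime m) :
    powSub (DihedralGroup m) M = ⊤ := by
  rw [eq_top_iff]
  rintro (i | i) -
  · refine Subgroup.subset_closure ⟨r ((ZMod.unitOfCoprime M hcop)⁻¹ * i), ?_⟩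
    rw [r_pow, mul_right_comm, ← ZMod.coe_unitOfCoprime M hcop, ← Units.val_mul, inv_mul_cancel,
      Units.val_one, one_mul]
  · exact Subgroup.subset_closure ⟨sr i, sr_pow_of_odd i hM⟩

theorem rotations_eq_powSub_index [NeZero m] {A : AddSubgroup (ZMod m)} (hA : Even A.index) :
    rotations A = powSub (DihedralGroup m) A.index := by
  rw [powSub_eq_rotations_of_even hA, ZMod.zmultiples_index_eq]

section TwoPow

variable {e : ℕ}

theorem powSub_eq_top_or_rotations (he : e ≠ 0) (M : ℕ) :
    powSub (DihedralGroup (2 ^ e)) M = ⊤ ∨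
      ∃ A : AddSubgroup (ZMod (2 ^ e)), 1 ∉ A ∧
        powSub (DihedralGroup (2 ^ e)) M = rotations A := by
  rcases Nat.even_or_odd M with hM | hM
  · exact .inr ⟨_, ZMod.one_notMem_zmultiples_of_even (dvd_pow_self 2 he) hM,
      powSub_eq_rotations_of_even hM⟩
  · exact .inl (powSub_eq_top_of_odd hM ((Nat.coprime_two_right.mpr hM).pow_right e))

theorem isNonpower_rotations_top (he : e ≠ 0) :
    IsNonpower (rotations ⊤ : Subgroup (DihedralGroup (2 ^ e))) := by
  rintro ⟨M, -, hM⟩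
  rcases powSub_eq_top_or_rotations he M with h | ⟨A, hA, h⟩
  · have h0 : sr 0 ∈ (rotations ⊤ : Subgroup (DihedralGroup (2 ^ e))) := by rw [hM, h]; exact Subgroup.mem_top _
    exact sr_notMem_rotations _ _ h0
  · have h1 : (r 1 : DihedralGroup (2 ^ e)) ∈ rotations A := by rw [← h, ← hM]; exact AddSubgroup.mem_top (1 : ZMod (2 ^ e))
    exact hA h1

theorem isNonpower_of_sr_mem (he : e ≠ 0) {H : Subgroup (DihedralGroup (2 ^ e))}
    {i : ZMod (2 ^ e)} (hi : sr i ∈ H) (hH : H ≠ ⊤) : IsNonpower H := by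
  rintro ⟨M, -, rfl⟩
  rcases powSub_eq_top_or_rotations he M with h | ⟨A, -, h⟩
  · exact hH h
  · exact sr_notMem_rotations A i (h ▸ hi)

theorem not_isNonpower_of_forall_sr_notMem {H : Subgroup (DihedralGroup (2 ^ e))}
    (hH : ∀ i, sr i ∉ H) (hne : H ≠ rotations ⊤) : ¬ IsNonpower H := by
  rw [eq_rotations_rotationIndices hH] at hne ⊢
  have hA : rotationIndices H ≠ ⊤ := fun h => hne (h ▸ rfl)
  exact not_not.mpr ⟨_, Nat.pos_of_ne_zero AddSubgroup.index_ne_zero_of_finite,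
    rotations_eq_powSub_index (ZMod.even_index_of_ne_top hA)⟩

open Classical in
theorem isNonpower_iff_sr_mem_swap (he : e ≠ 0) (H : Subgroup (DihedralGroup (2 ^ e))) :
    IsNonpower H ↔ ∃ i, sr i ∈ Equiv.swap ⊤ (rotations ⊤) H := by
  rw [Equiv.swap_apply_def]
  split_ifs with htop hrot
  · subst htop
    simp only [sr_notMem_rotations, exists_false, iff_false, IsNonpower, not_not]
    exact ⟨1, one_pos, (powSub_one _).symm⟩
  · subst hrot
    simp only [Subgroup.mem_top, exists_const, iff_true]
    exact isNonpower_rotations_top he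
  · by_cases hsr : ∃ i, sr i ∈ H
    · obtain ⟨i, hi⟩ := hsr
      exact iff_of_true (isNonpower_of_sr_mem he hi htop) ⟨i, hi⟩
    · exact iff_of_false (not_isNonpower_of_forall_sr_notMem (not_exists.mp hsr) hrot) hsr

open Classical in
theorem card_isNonpower (he : e ≠ 0) :
    Nat.card {H : Subgroup (DihedralGroup (2 ^ e)) // IsNonpower H} = σ 1 (2 ^ e) := by
  rw [Nat.card_congr ((Equiv.swap ⊤ (rotations ⊤)).subtypeEquiv
      (q := fun H => ∃ i, sr i ∈ H) (isNonpower_iff_sr_mem_swap he)),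
    card_exists_sr_mem, ZMod.sum_index_addSubgroup]

end TwoPow

end DihedralGroup

theorem nps_dihedral_two_pow (n : ℕ) (hn : 3 ≤ n) :
    nps (DihedralGroup (2 ^ (n - 1))) = 2 ^ n - 1 := by
  rw [nps, DihedralGroup.card_isNonpower (by omega), sigma_one_apply_prime_pow Nat.prime_two,
    Nat.geomSum_eq le_rfl, Nat.div_one, Nat.sub_add_cancel (by omega)]
end

section
/- The generalized quaternion group Q_{2^n} of order 2^n (n ≥ 3) has exactly 2^{n−1} − 1 nonpower subgroups. -/
/-! Every subgroup `H` of `Q = QuaternionGroup (2 ^ m)` meets `⟨a 1⟩ ≅ ZMod (2 ^ (m + 1))` in the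
multiples of some `2 ^ t`, so `H` is either `⟨a 2^t⟩` with `t ≤ m + 1`, or `⟨a 2^k, xa j⟩` with
`k ≤ m` (as `(xa j)² = a 2^m`), the latter depending only on `k` and on `j mod 2^k`.
Odd `c` are coprime to `|Q|`, so `Q^c = Q`; every even power subgroup lies in `⟨a 2⟩`, and
`Q^(2^t) = ⟨a 2^t⟩` for `t ≥ 1`. Hence the nonpower subgroups are `⟨a 1⟩` and the `⟨a 2^k, xa j⟩`
with `1 ≤ k ≤ m` and `j < 2^k`: there are `1 + ∑_{k=1}^m 2^k = 2^(m+1) - 1` of them. -/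

namespace ZMod

theorem natCast_dvd_intCast_iff {N d : ℕ} (hd : d ∣ N) (x : ℤ) :
    (d : ZMod N) ∣ (x : ZMod N) ↔ (d : ℤ) ∣ x := by
  constructor
  · rintro ⟨c, hc⟩
    obtain ⟨y, rfl⟩ := ZMod.intCast_surjective c
    rw [← Int.cast_natCast, ← Int.cast_mul, ZMod.intCast_eq_intCast_iff_dvd_sub] at hc
    exact (dvd_sub_right (dvd_mul_right _ y)).1 ((Int.natCast_dvd_natCast.2 hd).trans hc)
  · rintro ⟨c, rfl⟩
    exact ⟨c, by push_cast; ring⟩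

theorem exists_addSubgroup_eq_natCast_dvd (N : ℕ) (S : AddSubgroup (ZMod N)) :
    ∃ d : ℕ, d ∣ N ∧ ∀ v, v ∈ S ↔ (d : ZMod N) ∣ v := by
  obtain ⟨g, hg⟩ := Int.subgroup_cyclic (S.comap (Int.castAddHom (ZMod N)))
  have mem_iff (x : ℤ) : (x : ZMod N) ∈ S ↔ g ∣ x := by
    rw [← Int.mem_zmultiples_iff, AddSubgroup.zmultiples_eq_closure, ← hg]
    rfl
  have hgN : g ∣ N := (mem_iff N).1 (by simp)
  refine ⟨g.natAbs, Int.natCast_dvd_natCast.1 (Int.natAbs_dvd.2 hgN), fun v => ?_⟩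
  obtain ⟨x, rfl⟩ := ZMod.intCast_surjective v
  rw [mem_iff, natCast_dvd_intCast_iff (Int.natCast_dvd_natCast.1 (Int.natAbs_dvd.2 hgN)),
    Int.natAbs_dvd]

theorem eq_of_natCast_dvd_sub {N d r r' : ℕ} (hd : d ∣ N) (hr : r < d) (hr' : r' < d)
    (h : (d : ZMod N) ∣ (r' : ZMod N) - r) : r = r' := by
  rw [← Int.cast_natCast r', ← Int.cast_natCast r, ← Int.cast_sub,
    natCast_dvd_intCast_iff hd] at h
  have := Int.eq_zero_of_abs_lt_dvd h (abs_sub_lt_iff.2 ⟨by omega, by omega⟩)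
  omega

theorem exists_natCast_lt_dvd_sub {N d : ℕ} [NeZero N] (hd : 0 < d) (j : ZMod N) :
    ∃ r < d, (d : ZMod N) ∣ j - r := by
  refine ⟨j.val % d, Nat.mod_lt _ hd, j.val / d, ?_⟩
  have := congrArg (Nat.cast : ℕ → ZMod N) (Nat.div_add_mod j.val d)
  push_cast [ZMod.natCast_zmod_val] at this
  linear_combination -this

end ZMod

theorem powSub_eq_top_of_coprime {G : Type*} [Group G] {c : ℕ} (h : (Nat.card G).Coprime c) :
    powSub G c = ⊤ :=
  eq_top_iff.2 fun g _ =>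
    Subgroup.subset_closure ((powCoprime h).surjective g)

namespace QuaternionGroup

variable {n : ℕ}

theorem a_pow (v : ZMod (2 * n)) (k : ℕ) :
    (a v : QuaternionGroup n) ^ k = a ((k : ZMod (2 * n)) * v) := by
  induction k with
  | zero => simp
  | succ k ih => rw [pow_succ, ih, a_mul_a]; push_cast; ring_nf

theorem xa_pow_two_mul (v : ZMod (2 * n)) (s : ℕ) : xa v ^ (2 * s) = a (s * n) := by
  rw [pow_mul, xa_sq, a_pow]

def subA (d : ZMod (2 * n)) : Subgroup (QuaternionGroup n) where
  carrier := fun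
    | a v => d ∣ v
    | xa _ => False
  one_mem' := dvd_zero d
  mul_mem' := by
    rintro (v | v) (w | w) hv hw
    exacts [dvd_add hv hw, hw.elim, hv.elim, hv.elim]
  inv_mem' := by
    rintro (v | v) hv
    exacts [(dvd_neg (α := ZMod (2 * n))).2 hv, hv]

/-- `⟨a d, xa j⟩`, which is `{a v | d ∣ v} ∪ {xa v | d ∣ v - j}` as `(xa j)² = a n` lies
in `⟨a d⟩`. -/
def subAXa (d : ZMod (2 * n)) (hd : d ∣ (n : ZMod (2 * n))) (j : ZMod (2 * n)) :
    Subgroup (QuaternionGroup n) where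
  carrier := fun
    | a v => d ∣ v
    | xa v => d ∣ v - j
  one_mem' := dvd_zero d
  mul_mem' := by
    rintro (v | v) (w | w) hv hw
    · exact dvd_add hv hw
    · show d ∣ w - v - j
      rw [sub_right_comm]; exact dvd_sub hw hv
    · show d ∣ v + w - j
      rw [add_sub_right_comm]; exact dvd_add hv hw
    · show d ∣ n + w - v
      rw [show (n : ZMod (2 * n)) + w - v = n + (w - j) - (v - j) by ring]
      exact dvd_sub (dvd_add hd hw) hv
  inv_mem' := by
    rintro (v | v) hv
    · exact (dvd_neg (α := ZMod (2 * n))).2 hv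
    · show d ∣ n + v - j
      rw [add_sub_assoc]; exact dvd_add hd hv

variable {d v j : ZMod (2 * n)} {hd : d ∣ (n : ZMod (2 * n))}

@[simp] theorem a_mem_subA : a v ∈ subA d ↔ d ∣ v := Iff.rfl
@[simp] theorem xa_notMem_subA : xa v ∉ subA d := id
@[simp] theorem a_mem_subAXa : a v ∈ subAXa d hd j ↔ d ∣ v := Iff.rfl
@[simp] theorem xa_mem_subAXa : xa v ∈ subAXa d hd j ↔ d ∣ v - j := Iff.rfl

theorem xa_mem_subAXa_self : xa j ∈ subAXa d hd j := by simp

theorem subAXa_eq_subAXa_iff {j' : ZMod (2 * n)} :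
    subAXa d hd j = subAXa d hd j' ↔ d ∣ j' - j := by
  constructor
  · intro h
    have := xa_mem_subAXa_self (hd := hd) (j := j')
    rwa [← h, xa_mem_subAXa] at this
  · intro h
    ext (w | w)
    · simp
    · simp only [xa_mem_subAXa]
      rw [show w - j = (w - j') + (j' - j) by ring, dvd_add_left h]

theorem subA_le_powSub (c : ℕ) : subA (c : ZMod (2 * n)) ≤ powSub (QuaternionGroup n) c := by
  rintro (v | v) ⟨i, rfl⟩
  exact Subgroup.subset_closure ⟨a i, a_pow i c⟩

theorem powSub_two_mul_le_subA {s : ℕ} (hs : d ∣ 2 * s) (hsn : d ∣ s * n) :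
    powSub (QuaternionGroup n) (2 * s) ≤ subA d := by
  refine (Subgroup.closure_le _).2 ?_
  rintro _ ⟨v | v, rfl⟩
  · rw [SetLike.mem_coe, a_pow, a_mem_subA]; push_cast; exact dvd_mul_of_dvd_left hs v
  · rwa [SetLike.mem_coe, xa_pow_two_mul, a_mem_subA]

def aPart (H : Subgroup (QuaternionGroup n)) : AddSubgroup (ZMod (2 * n)) where
  carrier := {v | a v ∈ H}
  zero_mem' := H.one_mem
  add_mem' := H.mul_mem
  neg_mem' := H.inv_mem

theorem eq_subA_or_eq_subAXa (H : Subgroup (QuaternionGroup n)) :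
    ∃ d : ℕ, d ∣ 2 * n ∧ (H = subA (d : ZMod (2 * n)) ∨
      ∃ hd : (d : ZMod (2 * n)) ∣ n, ∃ j, H = subAXa d hd j) := by
  obtain ⟨d, hdN, hmem⟩ := ZMod.exists_addSubgroup_eq_natCast_dvd _ (aPart H)
  have a_mem (v : ZMod (2 * n)) : a v ∈ H ↔ (d : ZMod (2 * n)) ∣ v := hmem v
  refine ⟨d, hdN, ?_⟩
  by_cases hxa : ∃ j, xa j ∈ H
  · obtain ⟨j, hj⟩ := hxa
    have hd : (d : ZMod (2 * n)) ∣ n := (a_mem n).1 (by simpa using H.mul_mem hj hj)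
    refine Or.inr ⟨hd, j, ?_⟩
    ext (v | v)
    · simp [a_mem]
    · have : (xa j)⁻¹ * xa v = a (v - j) := congrArg a (by ring)
      rw [xa_mem_subAXa, ← H.mul_mem_cancel_left (H.inv_mem hj), this, a_mem]
  · simp only [not_exists] at hxa
    refine Or.inl ?_
    ext (v | v)
    · simp [a_mem]
    · simp [hxa v]

variable {j' : ZMod (2 * n)}

theorem dvd_of_subAXa_le {d' : ZMod (2 * n)} {hd' : d' ∣ (n : ZMod (2 * n))}
    (h : subAXa d hd j ≤ subAXa d' hd' j') : d' ∣ d :=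
  a_mem_subAXa.1 (h (a_mem_subAXa.2 dvd_rfl))

variable {m t : ℕ}

theorem not_two_pow_dvd_one (ht : 1 ≤ t) : ¬ (2 : ZMod (2 * 2 ^ m)) ^ t ∣ 1 := by
  intro h
  have h2 : ((2 : ℕ) : ZMod (2 * 2 ^ m)) ∣ ((1 : ℤ) : ZMod (2 * 2 ^ m)) := by
    simpa using (dvd_pow_self (2 : ZMod (2 * 2 ^ m)) (by omega)).trans h
  rw [ZMod.natCast_dvd_intCast_iff (dvd_mul_right 2 _)] at h2
  omega

theorem le_of_two_pow_dvd_two_pow {k : ℕ} (ht : t ≤ m + 1)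
    (h : (2 : ZMod (2 * 2 ^ m)) ^ t ∣ 2 ^ k) : t ≤ k := by
  have htN : 2 ^ t ∣ 2 * 2 ^ m := (pow_dvd_pow 2 ht).trans (pow_succ' 2 m).dvd
  rw [show (2 : ZMod (2 * 2 ^ m)) ^ k = ((2 ^ k : ℤ) : ZMod (2 * 2 ^ m)) by push_cast; rfl,
    show (2 : ZMod (2 * 2 ^ m)) ^ t = ((2 ^ t : ℕ) : ZMod (2 * 2 ^ m)) by push_cast; rfl,
    ZMod.natCast_dvd_intCast_iff htN] at h
  exact (Nat.pow_dvd_pow_iff_le_right one_lt_two).1 (by exact_mod_cast h)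

theorem two_pow_dvd_natCast_two_pow {k : ℕ} (hk : k ≤ m) :
    (2 : ZMod (2 * 2 ^ m)) ^ k ∣ ((2 ^ m : ℕ) : ZMod (2 * 2 ^ m)) := by
  push_cast
  exact pow_dvd_pow 2 hk

theorem eq_subA_or_eq_subAXa_two_pow (H : Subgroup (QuaternionGroup (2 ^ m))) :
    ∃ t ≤ m + 1, H = subA (2 ^ t) ∨
      ∃ hd : (2 : ZMod (2 * 2 ^ m)) ^ t ∣ ((2 ^ m : ℕ) : ZMod (2 * 2 ^ m)), ∃ j,
        H = subAXa (2 ^ t) hd j := by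
  obtain ⟨d, hdN, hH⟩ := eq_subA_or_eq_subAXa H
  obtain ⟨t, ht, rfl⟩ := (Nat.dvd_prime_pow Nat.prime_two).1 (pow_succ' 2 m ▸ hdN)
  rw [show ((2 ^ t : ℕ) : ZMod (2 * 2 ^ m)) = 2 ^ t by push_cast; rfl] at hH
  exact ⟨t, ht, hH⟩

theorem powSub_eq_top_of_odd {c : ℕ} (hc : Odd c) : powSub (QuaternionGroup (2 ^ m)) c = ⊤ := by
  refine powSub_eq_top_of_coprime ?_
  rw [Nat.card_eq_fintype_card, QuaternionGroup.card, show 4 * 2 ^ m = 2 ^ (m + 2) by ring]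
  exact (Nat.coprime_two_left.2 hc).pow_left _

theorem powSub_le_subA_two (hm : 1 ≤ m) {c : ℕ} (hc : Even c) :
    powSub (QuaternionGroup (2 ^ m)) c ≤ subA 2 := by
  obtain ⟨s, rfl⟩ := hc
  rw [← two_mul]
  refine powSub_two_mul_le_subA ?_ ?_ <;> push_cast
  · exact dvd_mul_right 2 _
  · exact dvd_mul_of_dvd_right (dvd_pow_self 2 (by omega)) _

theorem powSub_two_pow (hm : 1 ≤ m) (ht : 1 ≤ t) :
    powSub (QuaternionGroup (2 ^ m)) (2 ^ t) = subA (2 ^ t) := by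
  apply le_antisymm
  · obtain ⟨s, rfl⟩ : ∃ s, t = s + 1 := ⟨t - 1, by omega⟩
    rw [show 2 ^ (s + 1) = 2 * 2 ^ s from pow_succ' 2 s]
    refine powSub_two_mul_le_subA (by push_cast; rw [pow_succ']) ⟨2 ^ (m - 1), ?_⟩
    push_cast
    rw [← pow_add, ← pow_add]
    congr 1
    omega
  · simpa using subA_le_powSub (n := 2 ^ m) (2 ^ t)

theorem exists_eq_powSub_iff (hm : 1 ≤ m) (H : Subgroup (QuaternionGroup (2 ^ m))) :
    (∃ c, 0 < c ∧ H = powSub (QuaternionGroup (2 ^ m)) c) ↔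
      H = ⊤ ∨ ∃ t, 1 ≤ t ∧ H = subA (2 ^ t) := by
  constructor
  · rintro ⟨c, -, rfl⟩
    rcases Nat.even_or_odd c with hc | hc
    · have hle := powSub_le_subA_two hm hc
      obtain ⟨t, -, ht | ⟨hd, j, hj⟩⟩ := eq_subA_or_eq_subAXa_two_pow (powSub _ c)
      · rcases Nat.eq_zero_or_pos t with rfl | ht1
        · have : a 1 ∈ powSub (QuaternionGroup (2 ^ m)) c := by rw [ht, a_mem_subA, pow_zero]
          exact (not_two_pow_dvd_one (t := 1) le_rfl (by simpa using hle this)).elim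
        · exact Or.inr ⟨t, ht1, ht⟩
      · exact absurd (hle (hj ▸ xa_mem_subAXa_self)) xa_notMem_subA
    · exact Or.inl (powSub_eq_top_of_odd hc)
  · rintro (rfl | ⟨t, ht, rfl⟩)
    · exact ⟨1, one_pos, (powSub_eq_top_of_odd odd_one).symm⟩
    · exact ⟨2 ^ t, by positivity, (powSub_two_pow hm ht).symm⟩

def nonpowerSubgroup (m : ℕ) :
    Option (Σ k : Fin m, Fin (2 ^ (k.1 + 1))) → Subgroup (QuaternionGroup (2 ^ m))
  | none => subA 1
  | some ⟨k, j⟩ => subAXa (2 ^ (k.1 + 1)) (two_pow_dvd_natCast_two_pow k.2) (j.1 : ℕ)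

theorem xa_mem_nonpowerSubgroup_some (k : Fin m) (j : Fin (2 ^ (k.1 + 1))) :
    xa (j.1 : ZMod (2 * 2 ^ m)) ∈ nonpowerSubgroup m (some ⟨k, j⟩) :=
  xa_mem_subAXa_self (hd := two_pow_dvd_natCast_two_pow k.2)

theorem isNonpower_iff (hm : 1 ≤ m) (H : Subgroup (QuaternionGroup (2 ^ m))) :
    IsNonpower H ↔ H ≠ ⊤ ∧ ∀ t, 1 ≤ t → H ≠ subA (2 ^ t) := by
  rw [IsNonpower, exists_eq_powSub_iff hm]
  push Not
  rfl

theorem isNonpower_nonpowerSubgroup (hm : 1 ≤ m)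
    (x : Option (Σ k : Fin m, Fin (2 ^ (k.1 + 1)))) :
    IsNonpower (nonpowerSubgroup m x) := by
  rw [isNonpower_iff hm]
  rcases x with _ | ⟨k, j⟩
  · refine ⟨fun h => xa_notMem_subA (h ▸ Subgroup.mem_top (xa 0)), fun t ht h => ?_⟩
    have : a 1 ∈ subA (2 ^ t : ZMod (2 * 2 ^ m)) := h ▸ a_mem_subA.2 dvd_rfl
    exact not_two_pow_dvd_one ht (a_mem_subA.1 this)
  · refine ⟨fun h => ?_, fun t _ h => xa_notMem_subA (h ▸ xa_mem_nonpowerSubgroup_some k j)⟩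
    have : a 1 ∈ nonpowerSubgroup m (some ⟨k, j⟩) := h ▸ Subgroup.mem_top (a 1)
    exact not_two_pow_dvd_one (Nat.le_add_left 1 k)
      ((a_mem_subAXa (hd := two_pow_dvd_natCast_two_pow k.2)).1 this)

theorem nonpowerSubgroup_injective : Function.Injective (nonpowerSubgroup m) := by
  rintro (_ | ⟨k, j⟩) (_ | ⟨k', j'⟩) h
  · rfl
  · exact (xa_notMem_subA (h ▸ xa_mem_nonpowerSubgroup_some k' j')).elim
  · exact (xa_notMem_subA (h ▸ xa_mem_nonpowerSubgroup_some k j)).elim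
  · simp only [nonpowerSubgroup] at h
    have hk : k = k' := by
      have := le_of_two_pow_dvd_two_pow (by omega) (dvd_of_subAXa_le h.le)
      have := le_of_two_pow_dvd_two_pow (by omega) (dvd_of_subAXa_le h.ge)
      omega
    subst hk
    have hj := subAXa_eq_subAXa_iff.1 h
    rw [show (2 : ZMod (2 * 2 ^ m)) ^ (k.1 + 1) = ((2 ^ (k.1 + 1) : ℕ) : ZMod (2 * 2 ^ m)) by
      push_cast; rfl] at hj
    have hdvd : 2 ^ (k.1 + 1) ∣ 2 * 2 ^ m := (pow_dvd_pow 2 (by omega)).trans (pow_succ' 2 m).dvd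
    rw [Fin.ext (ZMod.eq_of_natCast_dvd_sub hdvd j.2 j'.2 hj)]

theorem range_nonpowerSubgroup (hm : 1 ≤ m) :
    Set.range (nonpowerSubgroup m) = {H | IsNonpower H} := by
  refine (Set.range_subset_iff.2 (isNonpower_nonpowerSubgroup hm)).antisymm fun H hH => ?_
  obtain ⟨hT, hA⟩ := (isNonpower_iff hm H).1 hH
  obtain ⟨t, ht, rfl | ⟨hd, j, rfl⟩⟩ := eq_subA_or_eq_subAXa_two_pow H
  · obtain rfl | ht1 := Nat.eq_zero_or_pos t
    · exact ⟨none, by rw [pow_zero]; rfl⟩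
    · exact absurd rfl (hA t ht1)
  · obtain _ | k := t
    · exact absurd (eq_top_iff.2 fun g _ => by cases g <;> simp) hT
    · have hk : k + 1 ≤ m := le_of_two_pow_dvd_two_pow ht (by exact_mod_cast hd)
      obtain ⟨r, hr, hjr⟩ := ZMod.exists_natCast_lt_dvd_sub (N := 2 * 2 ^ m) (d := 2 ^ (k + 1))
        (by positivity) j
      refine ⟨some ⟨⟨k, hk⟩, ⟨r, hr⟩⟩, subAXa_eq_subAXa_iff.2 ?_⟩
      exact_mod_cast hjr

theorem card_option_sigma_fin_two_pow (m : ℕ) :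
    Nat.card (Option (Σ k : Fin m, Fin (2 ^ (k.1 + 1)))) = 2 ^ (m + 1) - 1 := by
  rw [Nat.card_eq_fintype_card, Fintype.card_option, Fintype.card_sigma]
  simp only [Fintype.card_fin]
  rw [Fin.sum_univ_eq_sum_range (fun k => 2 ^ (k + 1)) m]
  have hgeom := Nat.geomSum_eq le_rfl (m + 1)
  rw [Finset.sum_range_succ', pow_zero, Nat.add_one_sub_one, Nat.div_one] at hgeom
  omega

theorem nps_two_pow (hm : 1 ≤ m) : nps (QuaternionGroup (2 ^ m)) = 2 ^ (m + 1) - 1 := by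
  rw [nps, ← Set.coe_ofPred, ← range_nonpowerSubgroup hm,
    Nat.card_range_of_injective nonpowerSubgroup_injective, card_option_sigma_fin_two_pow]

end QuaternionGroup

theorem nps_generalized_quaternion (n : ℕ) (hn : 3 ≤ n) :
    nps (QuaternionGroup (2 ^ (n - 2))) = 2 ^ (n - 1) - 1 := by
  rw [show n - 1 = n - 2 + 1 by omega]
  exact QuaternionGroup.nps_two_pow (by omega)
end

section
/- The extraspecial group M(p) of order p^3 and exponent p (p an odd prime) has exactly p^2 + 2p + 2 nonpower subgroups. -/
/-- Counting subgroups of order `p` in a group of exponent dividing `p`. -/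
private lemma count_order_p {G : Type*} [Group G] [Finite G] {p : ℕ} (hp : p.Prime)
    (hpow : ∀ g : G, g ^ p = 1) :
    Nat.card {H : Subgroup G // Nat.card H = p} * (p - 1) = Nat.card G - 1 := by
  classical
  have : Fintype G := Fintype.ofFinite G
  have horder : ∀ g : G, g ≠ 1 → orderOf g = p := by
    intro g hg
    rcases hp.eq_one_or_self_of_dvd _ (orderOf_dvd_of_pow_eq_one (hpow g)) with h | h
    · exact absurd (orderOf_eq_one_iff.mp h) hg
    · exact h
  have hcardzp : ∀ g : G, g ≠ 1 → Nat.card (Subgroup.zpowers g) = p := fun g hg => by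
    rw [Nat.card_zpowers, horder g hg]
  set S : Finset G := Finset.univ.filter (fun g => g ≠ 1) with hS
  set T : Finset (Subgroup G) := Finset.univ.filter (fun H => Nat.card H = p) with hT
  have hmem : ∀ g ∈ S, Subgroup.zpowers g ∈ T := by
    intro g hg
    simp only [hS, Finset.mem_filter, Finset.mem_univ, true_and] at hg
    simp only [hT, Finset.mem_filter, Finset.mem_univ, true_and]
    exact hcardzp g hg
  have key := Finset.card_eq_sum_card_fiberwise hmem
  have hfiber : ∀ H ∈ T, (S.filter (fun g => Subgroup.zpowers g = H)).card = p - 1 := by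
    intro H hH
    simp only [hT, Finset.mem_filter, Finset.mem_univ, true_and] at hH
    have heq : S.filter (fun g => Subgroup.zpowers g = H)
        = (Finset.univ.filter (fun g => g ∈ H)).erase 1 := by
      ext g
      simp only [hS, Finset.mem_filter, Finset.mem_univ, true_and, Finset.mem_erase]
      constructor
      · rintro ⟨hg, rfl⟩
        exact ⟨hg, Subgroup.mem_zpowers g⟩
      · rintro ⟨hg, hgH⟩
        refine ⟨hg, Subgroup.eq_of_le_of_card_ge (Subgroup.zpowers_le.mpr hgH) ?_⟩
        rw [hH, hcardzp g hg]
    have hcardH : (Finset.univ.filter (fun g => g ∈ H)).card = p := by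
      rw [← hH, Nat.card_eq_fintype_card, Fintype.card_subtype]
    rw [heq, Finset.card_erase_of_mem (by simp [H.one_mem]), hcardH]
  have hsum : S.card = T.card * (p - 1) := by
    rw [key, Finset.sum_congr rfl hfiber, Finset.sum_const, smul_eq_mul]
  have hScard : S.card = Nat.card G - 1 := by
    have : S = Finset.univ.erase 1 := by
      ext g; simp [hS]
    rw [this, Finset.card_erase_of_mem (Finset.mem_univ 1), Finset.card_univ,
      Nat.card_eq_fintype_card]
  have hTcard : Nat.card {H : Subgroup G // Nat.card H = p} = T.card := by
    rw [Nat.card_eq_fintype_card, Fintype.card_subtype]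
  rw [hTcard, ← hsum, hScard]

private lemma card_center_eq {G : Type*} [Group G] [Finite G] {p : ℕ} (hp : p.Prime)
    (hcard : Nat.card G = p ^ 3) (hnonab : ¬ ∀ x y : G, x * y = y * x) :
    Nat.card (Subgroup.center G) = p := by
  haveI : Fact p.Prime := ⟨hp⟩
  have hpg : IsPGroup p G := IsPGroup.of_card hcard
  have hnt : Nontrivial G := by
    rw [← Finite.one_lt_card_iff_nontrivial, hcard]
    exact Nat.one_lt_pow (by norm_num) hp.one_lt
  have hcnt : Nontrivial (Subgroup.center G) := hpg.center_nontrivial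
  have hdvd : Nat.card (Subgroup.center G) ∣ p ^ 3 :=
    hcard ▸ Subgroup.card_subgroup_dvd_card _
  obtain ⟨k, hk, hck⟩ := (Nat.dvd_prime_pow hp).mp hdvd
  have hk0 : k ≠ 0 := by
    rintro rfl
    rw [pow_zero] at hck
    have := Finite.one_lt_card (α := Subgroup.center G)
    omega
  have hk3 : k ≠ 3 := by
    rintro rfl
    have : Subgroup.center G = ⊤ := Subgroup.eq_top_of_card_eq _ (by rw [hck, hcard])
    exact hnonab (Group.commGroupOfCenterEqTop this).mul_comm
  have hk2 : k ≠ 2 := by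
    rintro rfl
    have hq : Nat.card G = Nat.card (G ⧸ Subgroup.center G) * Nat.card (Subgroup.center G) :=
      Subgroup.card_eq_card_quotient_mul_card_subgroup _
    rw [hcard, hck] at hq
    have hqp : Nat.card (G ⧸ Subgroup.center G) = p := by
      have hppos : 0 < p ^ 2 := pow_pos hp.pos 2
      have : p * p ^ 2 = Nat.card (G ⧸ Subgroup.center G) * p ^ 2 := by
        rw [← hq]; ring
      exact (Nat.eq_of_mul_eq_mul_right hppos this).symm
    haveI : IsCyclic (G ⧸ Subgroup.center G) := isCyclic_of_prime_card hqp
    exact hnonab (commutative_of_cyclic_center_quotient (QuotientGroup.mk' _)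
      (QuotientGroup.ker_mk' _).le)
  interval_cases k
  · omega
  · rw [hck, pow_one]
  · omega
  · omega

private lemma center_le_of_card_sq {G : Type*} [Group G] [Finite G] {p : ℕ} (hp : p.Prime)
    (hcard : Nat.card G = p ^ 3) (hnonab : ¬ ∀ x y : G, x * y = y * x)
    (H : Subgroup G) (hH : Nat.card H = p ^ 2) : Subgroup.center G ≤ H := by
  haveI : Fact p.Prime := ⟨hp⟩
  by_contra hle
  obtain ⟨z, hz, hzH⟩ := SetLike.not_le_iff_exists.mp hle
  have hzc : Subgroup.zpowers z ≤ Subgroup.center G := Subgroup.zpowers_le.mpr hz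
  haveI : (Subgroup.zpowers z).Normal := by
    constructor
    intro n hn g
    have hcomm := Subgroup.mem_center_iff.mp (hzc hn) g
    rw [hcomm, mul_assoc, mul_inv_cancel, mul_one]
    exact hn
  set K := H ⊔ Subgroup.zpowers z with hK
  have hHK : H ≤ K := le_sup_left
  have hdvd1 : p ^ 2 ∣ Nat.card K := hH ▸ Subgroup.card_dvd_of_le hHK
  have hdvd2 : Nat.card K ∣ p ^ 3 := hcard ▸ Subgroup.card_subgroup_dvd_card K
  have hne : H ≠ K := by
    intro h
    exact hzH (h ▸ Subgroup.mem_sup_right (Subgroup.mem_zpowers z))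
  obtain ⟨k, hk, hck⟩ := (Nat.dvd_prime_pow hp).mp hdvd2
  have hk2 : 2 ≤ k := by
    by_contra hlt
    have : Nat.card K ∣ p ^ 1 := hck ▸ pow_dvd_pow p (by omega)
    have h1 : p ^ 2 ∣ p ^ 1 := dvd_trans hdvd1 this
    have := Nat.le_of_dvd (pow_pos hp.pos 1) h1
    have h2 : p ^ 1 < p ^ 2 := Nat.pow_lt_pow_right hp.one_lt (by omega)
    omega
  have hkne2 : k ≠ 2 := by
    rintro rfl
    exact hne (Subgroup.eq_of_le_of_card_ge hHK (by rw [hck, hH]))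
  have hk3 : k = 3 := by interval_cases k <;> omega
  have hKtop : K = ⊤ := Subgroup.eq_top_of_card_eq _ (by rw [hck, hk3, hcard])
  have hHcomm : ∀ a b : H, a * b = b * a := IsPGroup.commutative_of_card_eq_prime_sq hH
  apply hnonab
  intro x y
  have hxK : x ∈ K := hKtop ▸ Subgroup.mem_top x
  have hyK : y ∈ K := hKtop ▸ Subgroup.mem_top y
  rw [← SetLike.mem_coe, hK, Subgroup.mul_normal] at hxK hyK
  obtain ⟨h₁, hh₁, z₁, hz₁, rfl⟩ := hxK
  obtain ⟨h₂, hh₂, z₂, hz₂, rfl⟩ := hyK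
  have hz₁c := Subgroup.mem_center_iff.mp (hzc hz₁)
  have hz₂c := Subgroup.mem_center_iff.mp (hzc hz₂)
  have hh : h₁ * h₂ = h₂ * h₁ := by
    have := hHcomm ⟨h₁, hh₁⟩ ⟨h₂, hh₂⟩
    exact Subtype.ext_iff.mp this
  have e1 : h₁ * z₁ * (h₂ * z₂) = (h₁ * h₂) * (z₁ * z₂) := by
    rw [mul_assoc h₁ z₁, ← mul_assoc z₁ h₂ z₂, ← hz₁c h₂, mul_assoc h₂ z₁ z₂, ← mul_assoc h₁ h₂]
  have e2 : h₂ * z₂ * (h₁ * z₁) = (h₂ * h₁) * (z₂ * z₁) := by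
    rw [mul_assoc h₂ z₂, ← mul_assoc z₂ h₁ z₁, ← hz₂c h₁, mul_assoc h₁ z₂ z₁, ← mul_assoc h₂ h₁]
  rw [e1, e2, hh, hz₂c z₁]

/-- First isomorphism style cardinality split for the image of a subgroup. -/
private lemma card_map_mul {G Q : Type*} [Group G] [Finite G] [Group Q] (f : G →* Q)
    (H : Subgroup G) :
    Nat.card H = Nat.card (H.map f) * Nat.card (f.ker.subgroupOf H) := by
  have h1 : Nat.card H
      = Nat.card (H ⧸ (f.comp H.subtype).ker) * Nat.card (f.comp H.subtype).ker :=
    Subgroup.card_eq_card_quotient_mul_card_subgroup _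
  have h2 : (f.comp H.subtype).ker = f.ker.subgroupOf H :=
    (MonoidHom.comap_ker f H.subtype).symm
  have h3 : Nat.card (H ⧸ (f.comp H.subtype).ker) = Nat.card (H.map f) := by
    have hrange : (f.comp H.subtype).range = H.map f := by
      rw [MonoidHom.range_comp, Subgroup.range_subtype]
    rw [Nat.card_congr (QuotientGroup.quotientKerEquivRange (f.comp H.subtype)).toEquiv, hrange]
  rw [h1, h3, h2]

theorem nps_extraspecial_exponent_p (G : Type*) [Group G] [Finite G]
    (p : ℕ) (hp : p.Prime) (hodd : Odd p)
    (hcard : Nat.card G = p ^ 3) (hexp : Monoid.exponent G = p)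
    (hnonab : ¬ ∀ x y : G, x * y = y * x) :
    nps G = p ^ 2 + 2 * p + 2 := by
  classical
  haveI : Fact p.Prime := ⟨hp⟩
  have hp1 : 1 < p := hp.one_lt
  have hpow : ∀ g : G, g ^ p = 1 := fun g => hexp ▸ Monoid.pow_exponent_eq_one g
  -- power subgroups are ⊥ and ⊤
  have hbot : powSub G p = ⊥ := by
    rw [eq_bot_iff, powSub, Subgroup.closure_le]
    rintro x ⟨g, rfl⟩
    simp [hpow g]
  have htop : powSub G 1 = ⊤ := by
    have huniv : {x : G | ∃ g : G, g ^ 1 = x} = Set.univ := by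
      ext x; simp
    rw [powSub, huniv, Subgroup.closure_univ]
  have hchar : ∀ H : Subgroup G, IsNonpower H ↔ (H ≠ ⊥ ∧ H ≠ ⊤) := by
    intro H
    unfold IsNonpower
    constructor
    · intro h
      constructor
      · rintro rfl; exact h ⟨p, hp.pos, hbot.symm⟩
      · rintro rfl; exact h ⟨1, one_pos, htop.symm⟩
    · rintro ⟨h1, h2⟩ ⟨m, hm, rfl⟩
      by_cases hdvd : p ∣ m
      · apply h1
        rw [eq_bot_iff, powSub, Subgroup.closure_le]
        rintro x ⟨g, rfl⟩
        obtain ⟨k, rfl⟩ := hdvd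
        simp [pow_mul, hpow g]
      · apply h2
        have hcop : (Nat.card G).Coprime m := by
          rw [hcard]
          exact Nat.Coprime.pow_left 3 ((Nat.Prime.coprime_iff_not_dvd hp).mpr hdvd)
        have huniv : {x : G | ∃ g : G, g ^ m = x} = Set.univ := by
          ext x
          simp only [Set.mem_setOf_eq, Set.mem_univ, iff_true]
          exact ⟨(powCoprime hcop).symm x, (powCoprime hcop).apply_symm_apply x⟩
        rw [powSub, huniv, Subgroup.closure_univ]
  -- classification by cardinality
  have horderclass : ∀ H : Subgroup G,
      (H ≠ ⊥ ∧ H ≠ ⊤) ↔ (Nat.card H = p ∨ Nat.card H = p ^ 2) := by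
    intro H
    have hdvd : Nat.card H ∣ p ^ 3 := hcard ▸ Subgroup.card_subgroup_dvd_card H
    obtain ⟨k, hk, hcd⟩ := (Nat.dvd_prime_pow hp).mp hdvd
    have hpsq : 1 < p ^ 2 := Nat.one_lt_pow (by norm_num) hp1
    have hpcb : p < p ^ 3 := by nlinarith
    have hpsq3 : p ^ 2 < p ^ 3 := by nlinarith
    constructor
    · rintro ⟨h1, h2⟩
      interval_cases k
      · exact absurd (Subgroup.card_eq_one.mp (by simpa using hcd)) h1
      · left; simpa using hcd
      · right; exact hcd
      · exact absurd (Subgroup.eq_top_of_card_eq _ (by rw [hcd, hcard])) h2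
    · intro h
      constructor
      · rintro rfl
        rw [Subgroup.card_bot] at h
        rcases h with h | h <;> omega
      · rintro rfl
        rw [Subgroup.card_top, hcard] at h
        rcases h with h | h <;> omega
  -- count subgroups of order p
  have hcount : ∀ (K : Type _) [Group K] [Finite K], ∀ (hpw : ∀ g : K, g ^ p = 1) (n : ℕ),
      Nat.card K = p ^ (n + 1) →
      Nat.card {H : Subgroup K // Nat.card H = p} * (p - 1) = p ^ (n + 1) - 1 := by
    intro K _ _ hpw n hc
    rw [← hc]
    exact count_order_p hp hpw
  have hA : Nat.card {H : Subgroup G // Nat.card H = p} = p ^ 2 + p + 1 := by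
    have h1 := hcount G hpow 2 hcard
    have h2 : (p ^ 2 + p + 1) * (p - 1) = p ^ 3 - 1 := by
      obtain ⟨q, rfl⟩ : ∃ q, p = q + 1 := ⟨p - 1, by omega⟩
      apply Nat.eq_sub_of_add_eq
      simp only [Nat.add_sub_cancel]
      ring
    exact Nat.eq_of_mul_eq_mul_right (by omega) (h1.trans h2.symm)
  -- quotient by center
  set Z := Subgroup.center G with hZdef
  have hZ : Nat.card Z = p := card_center_eq hp hcard hnonab
  have hQcard : Nat.card (G ⧸ Z) = p ^ 2 := by
    have hq : Nat.card G = Nat.card (G ⧸ Z) * Nat.card Z :=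
      Subgroup.card_eq_card_quotient_mul_card_subgroup _
    rw [hcard, hZ] at hq
    have : p ^ 2 * p = Nat.card (G ⧸ Z) * p := by rw [← hq]; ring
    exact (Nat.eq_of_mul_eq_mul_right hp.pos this.symm)
  have hQpow : ∀ x : G ⧸ Z, x ^ p = 1 := by
    intro x
    obtain ⟨g, rfl⟩ := QuotientGroup.mk'_surjective Z x
    rw [← map_pow, hpow g, map_one]
  have hBq : Nat.card {K : Subgroup (G ⧸ Z) // Nat.card K = p} = p + 1 := by
    have h1 := hcount (G ⧸ Z) hQpow 1 hQcard
    have h2 : (p + 1) * (p - 1) = p ^ 2 - 1 := by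
      obtain ⟨q, rfl⟩ : ∃ q, p = q + 1 := ⟨p - 1, by omega⟩
      apply Nat.eq_sub_of_add_eq
      simp only [Nat.add_sub_cancel]
      ring
    exact Nat.eq_of_mul_eq_mul_right (by omega) (h1.trans h2.symm)
  -- bijection between order p^2 subgroups of G and order p subgroups of G/Z
  have hker : (QuotientGroup.mk' Z).ker = Z := QuotientGroup.ker_mk' Z
  have hB : Nat.card {H : Subgroup G // Nat.card H = p ^ 2} = p + 1 := by
    rw [← hBq]
    apply Nat.card_congr
    have hcardmap : ∀ H : Subgroup G, Nat.card H = p ^ 2 →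
        Nat.card (H.map (QuotientGroup.mk' Z)) = p := by
      intro H hH
      have hle : Z ≤ H := center_le_of_card_sq hp hcard hnonab H hH
      have h := card_map_mul (QuotientGroup.mk' Z) H
      have hkc : Nat.card ((QuotientGroup.mk' Z).ker.subgroupOf H) = p := by
        rw [hker, Nat.card_congr (Subgroup.subgroupOfEquivOfLe hle).toEquiv, hZ]
      rw [hH, hkc] at h
      have : Nat.card (H.map (QuotientGroup.mk' Z)) * p = p * p := by
        rw [← h]; ring
      exact Nat.eq_of_mul_eq_mul_right hp.pos this
    have hcardcomap : ∀ K : Subgroup (G ⧸ Z), Nat.card K = p →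
        Nat.card (K.comap (QuotientGroup.mk' Z)) = p ^ 2 := by
      intro K hK
      set H := K.comap (QuotientGroup.mk' Z) with hH
      have hmap : H.map (QuotientGroup.mk' Z) = K :=
        Subgroup.map_comap_eq_self_of_surjective (QuotientGroup.mk'_surjective Z) K
      have hle : (QuotientGroup.mk' Z).ker ≤ H := by
        intro x hx
        simp only [hH, Subgroup.mem_comap]
        rw [MonoidHom.mem_ker] at hx
        rw [hx]
        exact K.one_mem
      have h := card_map_mul (QuotientGroup.mk' Z) H
      have hkc : Nat.card ((QuotientGroup.mk' Z).ker.subgroupOf H) = p := by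
        rw [Nat.card_congr (Subgroup.subgroupOfEquivOfLe hle).toEquiv, hker, hZ]
      rw [hmap, hK, hkc] at h
      rw [h]; ring
    exact
      { toFun := fun H => ⟨H.1.map (QuotientGroup.mk' Z), hcardmap H.1 H.2⟩
        invFun := fun K => ⟨K.1.comap (QuotientGroup.mk' Z), hcardcomap K.1 K.2⟩
        left_inv := by
          rintro ⟨H, hH⟩
          have hle : Z ≤ H := center_le_of_card_sq hp hcard hnonab H hH
          exact Subtype.ext (Subgroup.comap_map_eq_self (by rw [hker]; exact hle))
        right_inv := by
          rintro ⟨K, hK⟩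
          exact Subtype.ext
            (Subgroup.map_comap_eq_self_of_surjective (QuotientGroup.mk'_surjective Z) K) }
  -- assemble
  have : Fintype (Subgroup G) := Fintype.ofFinite _
  have hiff : ∀ H : Subgroup G,
      IsNonpower H ↔ (Nat.card H = p ∨ Nat.card H = p ^ 2) :=
    fun H => (hchar H).trans (horderclass H)
  have hdisj : Disjoint (Finset.univ.filter (fun H : Subgroup G => Nat.card H = p))
      (Finset.univ.filter (fun H : Subgroup G => Nat.card H = p ^ 2)) := by
    rw [Finset.disjoint_left]
    intro H h1 h2
    simp only [Finset.mem_filter, Finset.mem_univ, true_and] at h1 h2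
    have hpsq : p < p ^ 2 := by nlinarith
    omega
  have hsplit : nps G = Nat.card {H : Subgroup G // Nat.card H = p}
      + Nat.card {H : Subgroup G // Nat.card H = p ^ 2} := by
    rw [nps, Nat.card_congr (Equiv.subtypeEquivRight hiff)]
    rw [Nat.card_eq_fintype_card, Nat.card_eq_fintype_card, Nat.card_eq_fintype_card,
      Fintype.card_subtype, Fintype.card_subtype, Fintype.card_subtype]
    rw [Finset.filter_or, Finset.card_union_of_disjoint hdisj]
  rw [hsplit, hA, hB]
  ring
end
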